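/- arXiv:2403.17875 — 9 statements merged into one kernel-verified Lean document; each statement's English description precedes it below -/
import Mathlib

section
/- Assume that lim_{x↑∞} φ'(x)/p'(x) = 0. Then the function x ↦ φ'(x)/p'(x) is differentiable on (0,∞) with derivative C·r(x)·Φ(x), and for every x > 0 one has ∫ₓ^∞ r(s)Φ(s) ds = −φ'(x)/(C p'(x)). -/
open Filter Set MeasureTheory Topology

theorem stmt_1
    (b σ r : ℝ → ℝ) (r₀ r₁ : ℝ)
    (hbc : ContinuousOn b (Ioi 0))
    (hσc : ContinuousOn σ (Ioi 0))
    (hrc : ContinuousOn r (Ioi 0))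
    (hσpos : ∀ x ∈ Ioi (0:ℝ), 0 < σ x)
    (hr₀ : 0 < r₀) (hr₀₁ : r₀ ≤ r₁)
    (hrbd : ∀ x ∈ Ioi (0:ℝ), r₀ ≤ r x ∧ r x ≤ r₁)
    (p' : ℝ → ℝ)
    (hp' : ∀ x ∈ Ioi (0:ℝ), p' x = Real.exp (-(2:ℝ) * ∫ s in (1:ℝ)..x, b s / (σ s) ^ 2))
    (φ ψ φ' ψ' φ'' ψ'' : ℝ → ℝ)
    (hφ1 : ∀ x ∈ Ioi (0:ℝ), HasDerivAt φ (φ' x) x)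
    (hφ2 : ∀ x ∈ Ioi (0:ℝ), HasDerivAt φ' (φ'' x) x)
    (hφ2c : ContinuousOn φ'' (Ioi 0))
    (hψ1 : ∀ x ∈ Ioi (0:ℝ), HasDerivAt ψ (ψ' x) x)
    (hψ2 : ∀ x ∈ Ioi (0:ℝ), HasDerivAt ψ' (ψ'' x) x)
    (hψ2c : ContinuousOn ψ'' (Ioi 0))
    (hφpos : ∀ x ∈ Ioi (0:ℝ), 0 < φ x)
    (hφ'neg : ∀ x ∈ Ioi (0:ℝ), φ' x < 0)
    (hψpos : ∀ x ∈ Ioi (0:ℝ), 0 < ψ x)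
    (hψ'pos : ∀ x ∈ Ioi (0:ℝ), 0 < ψ' x)
    (hφODE : ∀ x ∈ Ioi (0:ℝ), (1/2) * σ x ^ 2 * φ'' x + b x * φ' x - r x * φ x = 0)
    (hψODE : ∀ x ∈ Ioi (0:ℝ), (1/2) * σ x ^ 2 * ψ'' x + b x * ψ' x - r x * ψ x = 0)
    (C : ℝ) (hC : 0 < C)
    (hWr : ∀ x ∈ Ioi (0:ℝ), φ x * ψ' x - φ' x * ψ x = C * p' x)
    (Ψ Φ : ℝ → ℝ)
    (hΨ : ∀ x ∈ Ioi (0:ℝ), Ψ x = 2 * ψ x / (C * σ x ^ 2 * p' x))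
    (hΦ : ∀ x ∈ Ioi (0:ℝ), Φ x = 2 * φ x / (C * σ x ^ 2 * p' x))
    (hφ'p'T : Tendsto (fun x => φ' x / p' x) atTop (𝓝 0)) :
    ∀ x ∈ Ioi (0:ℝ),
      HasDerivAt (fun y => φ' y / p' y) (C * r x * Φ x) x ∧
      IntegrableOn (fun s => r s * Φ s) (Ioi x) ∧
      (∫ s in Ioi x, r s * Φ s) = -(φ' x / (C * p' x)) := by
  -- continuity of q = b/σ² on Ioi 0
  set q : ℝ → ℝ := fun s => b s / σ s ^ 2 with hq
  have hqc : ContinuousOn q (Ioi 0) :=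
    hbc.div (hσc.pow 2) (fun y hy => pow_ne_zero _ (hσpos y hy).ne')
  have hp'pos : ∀ y ∈ Ioi (0:ℝ), 0 < p' y := fun y hy => by
    rw [hp' y hy]; exact Real.exp_pos _
  -- derivative of p'
  have hp'deriv : ∀ y ∈ Ioi (0:ℝ), HasDerivAt p' (p' y * (-2 * q y)) y := by
    intro y hy
    have hy0 : (0:ℝ) < y := hy
    have hsub : uIcc (1:ℝ) y ⊆ Ioi 0 := by
      intro t ht
      have := ht.1
      rcases le_total (1:ℝ) y with h | h
      · rw [uIcc_of_le h] at ht; exact lt_of_lt_of_le one_pos ht.1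
      · rw [uIcc_of_ge h] at ht; exact lt_of_lt_of_le hy0 ht.1
    have hII : IntervalIntegrable q volume 1 y :=
      (hqc.mono hsub).intervalIntegrable
    have hmeas : StronglyMeasurableAtFilter q (𝓝 y) :=
      hqc.stronglyMeasurableAtFilter isOpen_Ioi y hy
    have hca : ContinuousAt q y := hqc.continuousAt (isOpen_Ioi.mem_nhds hy)
    have hI : HasDerivAt (fun t => ∫ s in (1:ℝ)..t, q s) (q y) y :=
      intervalIntegral.integral_hasDerivAt_right hII hmeas hca
    have hF : HasDerivAt (fun t => Real.exp (-(2:ℝ) * ∫ s in (1:ℝ)..t, q s))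
        (Real.exp (-(2:ℝ) * ∫ s in (1:ℝ)..y, q s) * (-2 * q y)) y := by
      have := (hI.const_mul (-(2:ℝ))).exp
      simpa using this
    have heq : p' =ᶠ[𝓝 y] fun t => Real.exp (-(2:ℝ) * ∫ s in (1:ℝ)..t, q s) := by
      filter_upwards [isOpen_Ioi.mem_nhds hy] with t ht using hp' t ht
    have := hF.congr_of_eventuallyEq heq
    rwa [← hp' y hy] at this
  -- main derivative statement
  have key : ∀ y ∈ Ioi (0:ℝ), HasDerivAt (fun t => φ' t / p' t) (C * r y * Φ y) y := by
    intro y hy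
    have hp0 : p' y ≠ 0 := (hp'pos y hy).ne'
    have hσ0 : σ y ≠ 0 := (hσpos y hy).ne'
    have hd := (hφ2 y hy).div (hp'deriv y hy) hp0
    refine hd.congr_deriv (Eq.symm ?_)
    rw [hΦ y hy]
    have hode := hφODE y hy
    have h2 : σ y ^ 2 * φ'' y = 2 * (r y * φ y - b y * φ' y) := by linarith
    have h3 : σ y ^ 2 * (σ y)⁻¹ ^ 2 = 1 := by field_simp
    simp only [hq]; field_simp
    linear_combination (-1) * h2
  intro x hx
  have hx0 : (0:ℝ) < x := hx
  have hsub : Ioi x ⊆ Ioi (0:ℝ) := fun y hy => lt_trans hx0 hy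
  have hcont : ContinuousWithinAt (fun t => φ' t / p' t) (Ici x) x :=
    (key x hx).continuousAt.continuousWithinAt
  have hderiv : ∀ y ∈ Ioi x, HasDerivAt (fun t => φ' t / p' t) (C * r y * Φ y) y :=
    fun y hy => key y (hsub hy)
  have hΦpos : ∀ y ∈ Ioi (0:ℝ), 0 < Φ y := by
    intro y hy
    rw [hΦ y hy]
    have := hφpos y hy
    have := hσpos y hy
    have := hp'pos y hy
    positivity
  have hnonneg : ∀ y ∈ Ioi x, 0 ≤ C * r y * Φ y := by
    intro y hy
    have hy0 := hsub hy
    have hr : 0 < r y := lt_of_lt_of_le hr₀ (hrbd y hy0).1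
    have hΦ' := hΦpos y hy0
    positivity
  have hint : IntegrableOn (fun y => C * r y * Φ y) (Ioi x) :=
    integrableOn_Ioi_deriv_of_nonneg hcont hderiv hnonneg hφ'p'T
  have heq : ∫ y in Ioi x, C * r y * Φ y = 0 - φ' x / p' x :=
    integral_Ioi_of_hasDerivAt_of_nonneg hcont hderiv hnonneg hφ'p'T
  have hfun : (fun s => r s * Φ s) = fun s => C⁻¹ * (C * r s * Φ s) := by
    funext s; field_simp
  refine ⟨key x hx, ?_, ?_⟩
  · rw [hfun]; exact hint.const_mul _
  · rw [hfun, integral_const_mul, heq]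
    have hp0 : p' x ≠ 0 := (hp'pos x hx).ne'
    field_simp; ring
end

section
/- Assume that lim_{x↓0} ψ'(x)/p'(x) = 0 and lim_{x↑∞} φ'(x)/p'(x) = 0. Let F : (0,∞) → ℝ be a Borel function satisfying condition (IC), and let K ∈ ℝ be a constant such that F(x) ≥ K·r(x) for all x > 0. Then R_F(x) ≥ K for all x > 0. -/
open Filter Set MeasureTheory Topology

theorem stmt_2
    (b σ r : ℝ → ℝ) (r₀ r₁ : ℝ)
    (hbc : ContinuousOn b (Ioi 0))
    (hσc : ContinuousOn σ (Ioi 0))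
    (hrc : ContinuousOn r (Ioi 0))
    (hσpos : ∀ x ∈ Ioi (0:ℝ), 0 < σ x)
    (hr₀ : 0 < r₀) (hr₀₁ : r₀ ≤ r₁)
    (hrbd : ∀ x ∈ Ioi (0:ℝ), r₀ ≤ r x ∧ r x ≤ r₁)
    (p' : ℝ → ℝ)
    (hp' : ∀ x ∈ Ioi (0:ℝ), p' x = Real.exp (-(2:ℝ) * ∫ s in (1:ℝ)..x, b s / (σ s) ^ 2))
    (φ ψ φ' ψ' φ'' ψ'' : ℝ → ℝ)
    (hφ1 : ∀ x ∈ Ioi (0:ℝ), HasDerivAt φ (φ' x) x)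
    (hφ2 : ∀ x ∈ Ioi (0:ℝ), HasDerivAt φ' (φ'' x) x)
    (hφ2c : ContinuousOn φ'' (Ioi 0))
    (hψ1 : ∀ x ∈ Ioi (0:ℝ), HasDerivAt ψ (ψ' x) x)
    (hψ2 : ∀ x ∈ Ioi (0:ℝ), HasDerivAt ψ' (ψ'' x) x)
    (hψ2c : ContinuousOn ψ'' (Ioi 0))
    (hφpos : ∀ x ∈ Ioi (0:ℝ), 0 < φ x)
    (hφ'neg : ∀ x ∈ Ioi (0:ℝ), φ' x < 0)
    (hψpos : ∀ x ∈ Ioi (0:ℝ), 0 < ψ x)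
    (hψ'pos : ∀ x ∈ Ioi (0:ℝ), 0 < ψ' x)
    (hφODE : ∀ x ∈ Ioi (0:ℝ), (1/2) * σ x ^ 2 * φ'' x + b x * φ' x - r x * φ x = 0)
    (hψODE : ∀ x ∈ Ioi (0:ℝ), (1/2) * σ x ^ 2 * ψ'' x + b x * ψ' x - r x * ψ x = 0)
    (C : ℝ) (hC : 0 < C)
    (hWr : ∀ x ∈ Ioi (0:ℝ), φ x * ψ' x - φ' x * ψ x = C * p' x)
    (Ψ Φ : ℝ → ℝ)
    (hΨ : ∀ x ∈ Ioi (0:ℝ), Ψ x = 2 * ψ x / (C * σ x ^ 2 * p' x))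
    (hΦ : ∀ x ∈ Ioi (0:ℝ), Φ x = 2 * φ x / (C * σ x ^ 2 * p' x))
    (hψ'p'0 : Tendsto (fun x => ψ' x / p' x) (𝓝[>] (0:ℝ)) (𝓝 0))
    (hφ'p'T : Tendsto (fun x => φ' x / p' x) atTop (𝓝 0))
    (F : ℝ → ℝ) (hFm : Measurable F)
    (hFIC : ∀ x ∈ Ioi (0:ℝ),
      IntegrableOn (fun s => F s * Ψ s) (Ioc 0 x) ∧
      IntegrableOn (fun s => F s * Φ s) (Ioi x))
    (R : ℝ → ℝ)
    (hRdef : ∀ x ∈ Ioi (0:ℝ),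
      R x = φ x * (∫ s in Ioc (0:ℝ) x, F s * Ψ s) + ψ x * (∫ s in Ioi x, F s * Φ s))
    (K : ℝ) (hK : ∀ x ∈ Ioi (0:ℝ), K * r x ≤ F x) :
    ∀ x ∈ Ioi (0:ℝ), K ≤ R x := by
  have hσ0 : ∀ y ∈ Ioi (0:ℝ), σ y ≠ 0 := fun y hy => (hσpos y hy).ne'
  have hp'pos : ∀ y ∈ Ioi (0:ℝ), 0 < p' y := fun y hy => by
    rw [hp' y hy]; exact Real.exp_pos _
  have hbσc : ContinuousOn (fun s => b s / σ s ^ 2) (Ioi 0) :=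
    hbc.div (hσc.pow 2) (fun y hy => pow_ne_zero 2 (hσ0 y hy))
  -- derivative of p'
  have hp'deriv : ∀ y ∈ Ioi (0:ℝ),
      HasDerivAt p' (p' y * (-(2:ℝ) * (b y / σ y ^ 2))) y := by
    intro y hy
    have hint : IntervalIntegrable (fun s => b s / σ s ^ 2) volume 1 y := by
      apply (hbσc.mono ?_).intervalIntegrable
      intro z hz
      rcases le_total 1 y with h | h
      · rw [uIcc_of_le h] at hz; exact lt_of_lt_of_le one_pos hz.1
      · rw [uIcc_of_ge h] at hz; exact lt_of_lt_of_le hy.out hz.1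
    have hI : HasDerivAt (fun u => ∫ s in (1:ℝ)..u, b s / σ s ^ 2) (b y / σ y ^ 2) y :=
      intervalIntegral.integral_hasDerivAt_right hint
        (hbσc.stronglyMeasurableAtFilter isOpen_Ioi y hy)
        (hbσc.continuousAt (isOpen_Ioi.mem_nhds hy))
    have h2 : HasDerivAt (fun u => Real.exp (-(2:ℝ) * ∫ s in (1:ℝ)..u, b s / σ s ^ 2))
        (Real.exp (-(2:ℝ) * ∫ s in (1:ℝ)..y, b s / σ s ^ 2) * (-(2:ℝ) * (b y / σ y ^ 2))) y :=
      (hI.const_mul (-(2:ℝ))).exp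
    have heq : p' =ᶠ[𝓝 y] fun u => Real.exp (-(2:ℝ) * ∫ s in (1:ℝ)..u, b s / σ s ^ 2) :=
      eventually_of_mem (isOpen_Ioi.mem_nhds hy) (fun z hz => hp' z hz)
    have := h2.congr_of_eventuallyEq heq
    rwa [← hp' y hy] at this
  -- continuity of everything on Ioi 0
  have hp'c : ContinuousOn p' (Ioi 0) :=
    fun y hy => (hp'deriv y hy).continuousAt.continuousWithinAt
  have hψcont : ContinuousOn ψ (Ioi 0) :=
    fun y hy => (hψ1 y hy).continuousAt.continuousWithinAt
  have hφcont : ContinuousOn φ (Ioi 0) :=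
    fun y hy => (hφ1 y hy).continuousAt.continuousWithinAt
  have hden : ∀ y ∈ Ioi (0:ℝ), C * σ y ^ 2 * p' y ≠ 0 := fun y hy => by
    have := hσ0 y hy; have := hp'pos y hy; positivity
  have hΨc : ContinuousOn Ψ (Ioi 0) := by
    apply ContinuousOn.congr (f := fun y => 2 * ψ y / (C * σ y ^ 2 * p' y))
    · exact (continuousOn_const.mul hψcont).div
        ((continuousOn_const.mul (hσc.pow 2)).mul hp'c) hden
    · exact fun y hy => hΨ y hy
  have hΦc : ContinuousOn Φ (Ioi 0) := by
    apply ContinuousOn.congr (f := fun y => 2 * φ y / (C * σ y ^ 2 * p' y))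
    · exact (continuousOn_const.mul hφcont).div
        ((continuousOn_const.mul (hσc.pow 2)).mul hp'c) hden
    · exact fun y hy => hΦ y hy
  have hΨpos : ∀ y ∈ Ioi (0:ℝ), 0 < Ψ y := fun y hy => by
    rw [hΨ y hy]
    have := hψpos y hy; have := hσpos y hy; have := hp'pos y hy; positivity
  have hΦpos : ∀ y ∈ Ioi (0:ℝ), 0 < Φ y := fun y hy => by
    rw [hΦ y hy]
    have := hφpos y hy; have := hσpos y hy; have := hp'pos y hy; positivity
  -- derivatives of ψ'/p' and φ'/p'
  have hGd : ∀ y ∈ Ioi (0:ℝ),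
      HasDerivAt (fun u => ψ' u / p' u) (C * (r y * Ψ y)) y := by
    intro y hy
    have h := (hψ2 y hy).div (hp'deriv y hy) (hp'pos y hy).ne'
    refine h.congr_deriv (Eq.symm ?_)
    have hode := hψODE y hy
    rw [hΨ y hy]
    have hσne := hσ0 y hy
    have hpne := (hp'pos y hy).ne'
    field_simp
    linear_combination (-(2:ℝ)) * hode
  have hHd : ∀ y ∈ Ioi (0:ℝ),
      HasDerivAt (fun u => φ' u / p' u) (C * (r y * Φ y)) y := by
    intro y hy
    have h := (hφ2 y hy).div (hp'deriv y hy) (hp'pos y hy).ne'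
    refine h.congr_deriv (Eq.symm ?_)
    have hode := hφODE y hy
    rw [hΦ y hy]
    have hσne := hσ0 y hy
    have hpne := (hp'pos y hy).ne'
    field_simp
    linear_combination (-(2:ℝ)) * hode
  -- main part
  intro x hx
  have hx0 : (0:ℝ) < x := hx
  have hg'c : ContinuousOn (fun y => C * (r y * Ψ y)) (Ioi 0) :=
    continuousOn_const.mul (hrc.mul hΨc)
  -- right integral
  have hΦnn : ∀ y ∈ Ioi x, 0 ≤ C * (r y * Φ y) := by
    intro y hy
    have hy0 : y ∈ Ioi (0:ℝ) := lt_trans hx0 hy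
    have h1 := (hrbd y hy0).1
    have h2 := hΦpos y hy0
    have : 0 < r y := lt_of_lt_of_le hr₀ h1
    positivity
  have hHint : IntegrableOn (fun y => C * (r y * Φ y)) (Ioi x) :=
    integrableOn_Ioi_deriv_of_nonneg ((hHd x hx).continuousAt.continuousWithinAt)
      (fun y hy => hHd y (lt_trans hx0 hy)) hΦnn hφ'p'T
  have hHval : (∫ y in Ioi x, C * (r y * Φ y)) = 0 - φ' x / p' x :=
    integral_Ioi_of_hasDerivAt_of_nonneg ((hHd x hx).continuousAt.continuousWithinAt)
      (fun y hy => hHd y (lt_trans hx0 hy)) hΦnn hφ'p'T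
  -- left integral via the sequence x/(n+1)
  set G : ℝ → ℝ := fun u => ψ' u / p' u with hGdef
  have hεpos : ∀ n : ℕ, 0 < x / ((n : ℝ) + 1) := fun n => by positivity
  have hεle : ∀ n : ℕ, x / ((n : ℝ) + 1) ≤ x := fun n =>
    div_le_self hx0.le (le_add_of_nonneg_left (Nat.cast_nonneg n))
  have hIccsub : ∀ n : ℕ, Icc (x / ((n : ℝ) + 1)) x ⊆ Ioi (0:ℝ) :=
    fun n z hz => lt_of_lt_of_le (hεpos n) hz.1
  have hfi : ∀ n : ℕ, IntegrableOn (fun y => C * (r y * Ψ y)) (Ioc (x / ((n : ℝ) + 1)) x) :=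
    fun n => ((hg'c.mono (hIccsub n)).integrableOn_Icc).mono_set Ioc_subset_Icc_self
  have hFTC : ∀ n : ℕ, (∫ y in Ioc (x / ((n : ℝ) + 1)) x, C * (r y * Ψ y))
      = G x - G (x / ((n : ℝ) + 1)) := by
    intro n
    rw [← intervalIntegral.integral_of_le (hεle n)]
    apply intervalIntegral.integral_eq_sub_of_hasDerivAt_of_le (hεle n)
    · intro z hz; exact (hGd z (hIccsub n hz)).continuousAt.continuousWithinAt
    · intro z hz; exact hGd z (hIccsub n (Ioo_subset_Icc_self hz))
    · rw [intervalIntegrable_iff_integrableOn_Ioc_of_le (hεle n)]; exact hfi n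
  have hGnonneg : ∀ y ∈ Ioi (0:ℝ), 0 ≤ G y := fun y hy =>
    (div_pos (hψ'pos y hy) (hp'pos y hy)).le
  have hnormint : ∀ n : ℕ, (∫ y in Ioc (x / ((n : ℝ) + 1)) x, ‖C * (r y * Ψ y)‖) ≤ G x := by
    intro n
    have heq : (∫ y in Ioc (x / ((n : ℝ) + 1)) x, ‖C * (r y * Ψ y)‖)
        = ∫ y in Ioc (x / ((n : ℝ) + 1)) x, C * (r y * Ψ y) := by
      apply setIntegral_congr_fun measurableSet_Ioc
      intro z hz
      have hz0 : z ∈ Ioi (0:ℝ) := lt_trans (hεpos n) hz.1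
      have h1 := (hrbd z hz0).1
      have h2 := hΨpos z hz0
      have h3 : 0 < r z := lt_of_lt_of_le hr₀ h1
      exact Real.norm_of_nonneg (by positivity)
    rw [heq, hFTC n]
    have := hGnonneg (x / ((n : ℝ) + 1)) (hεpos n)
    linarith
  have htend0 : Tendsto (fun n : ℕ => x / ((n : ℝ) + 1)) atTop (𝓝[>] (0:ℝ)) := by
    rw [tendsto_nhdsWithin_iff]
    constructor
    · exact tendsto_const_nhds.div_atTop
        (tendsto_atTop_add_const_right _ 1 tendsto_natCast_atTop_atTop)
    · exact Eventually.of_forall (fun n => hεpos n)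
  have hg'int : IntegrableOn (fun y => C * (r y * Ψ y)) (Ioc 0 x) :=
    integrableOn_Ioc_of_intervalIntegral_norm_bounded_left hfi
      (htend0.mono_right nhdsWithin_le_nhds) (Eventually.of_forall hnormint)
  have hUnion : (⋃ n : ℕ, Ioc (x / ((n : ℝ) + 1)) x) = Ioc 0 x := by
    ext z
    simp only [mem_iUnion, mem_Ioc]
    constructor
    · rintro ⟨n, h1, h2⟩; exact ⟨lt_trans (hεpos n) h1, h2⟩
    · rintro ⟨h1, h2⟩
      obtain ⟨n, hn⟩ := exists_nat_gt (x / z)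
      refine ⟨n, ?_, h2⟩
      have h3 : x / z < (n : ℝ) + 1 := hn.trans (lt_add_one _)
      have h4 : x < ((n : ℝ) + 1) * z := (div_lt_iff₀ h1).mp h3
      rw [div_lt_iff₀ (by positivity : (0:ℝ) < (n : ℝ) + 1)]
      linarith
  have hmono : Monotone (fun n : ℕ => Ioc (x / ((n : ℝ) + 1)) x) := by
    intro m n hmn
    apply Ioc_subset_Ioc_left
    have h2 : (m : ℝ) + 1 ≤ (n : ℝ) + 1 := by
      have : (m : ℝ) ≤ (n : ℝ) := Nat.cast_le.mpr hmn
      linarith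
    gcongr
  have hval1 : Tendsto (fun n : ℕ => ∫ y in Ioc (x / ((n : ℝ) + 1)) x, C * (r y * Ψ y)) atTop
      (𝓝 (∫ y in Ioc 0 x, C * (r y * Ψ y))) := by
    have h := tendsto_setIntegral_of_monotone (fun n : ℕ => measurableSet_Ioc) hmono
      (f := fun y => C * (r y * Ψ y)) (μ := volume) (by rw [hUnion]; exact hg'int)
    rwa [hUnion] at h
  have hval2 : Tendsto (fun n : ℕ => ∫ y in Ioc (x / ((n : ℝ) + 1)) x, C * (r y * Ψ y)) atTop
      (𝓝 (G x)) := by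
    have h : Tendsto (fun n : ℕ => G x - G (x / ((n : ℝ) + 1))) atTop (𝓝 (G x - 0)) :=
      tendsto_const_nhds.sub (hψ'p'0.comp htend0)
    rw [sub_zero] at h
    exact h.congr (fun n => (hFTC n).symm)
  have hGval : (∫ y in Ioc 0 x, C * (r y * Ψ y)) = G x := tendsto_nhds_unique hval1 hval2
  -- integrals of K * (r * Ψ) and K * (r * Φ)
  have hKΨeq : (fun y => K * (r y * Ψ y)) = fun y => (K / C) * (C * (r y * Ψ y)) := by
    funext y
    field_simp
  have hKΦeq : (fun y => K * (r y * Φ y)) = fun y => (K / C) * (C * (r y * Φ y)) := by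
    funext y
    field_simp
  have hKΨint : IntegrableOn (fun y => K * (r y * Ψ y)) (Ioc 0 x) := by
    rw [hKΨeq]; exact hg'int.const_mul _
  have hKΦint : IntegrableOn (fun y => K * (r y * Φ y)) (Ioi x) := by
    rw [hKΦeq]; exact hHint.const_mul _
  have hKΨval : (∫ y in Ioc 0 x, K * (r y * Ψ y)) = (K / C) * (ψ' x / p' x) := by
    rw [hKΨeq, integral_const_mul, hGval]
  have hKΦval : (∫ y in Ioi x, K * (r y * Φ y)) = (K / C) * (0 - φ' x / p' x) := by
    rw [hKΦeq, integral_const_mul, hHval]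
  -- comparison
  have hA : (∫ y in Ioc 0 x, K * (r y * Ψ y)) ≤ ∫ y in Ioc 0 x, F y * Ψ y := by
    apply setIntegral_mono_on hKΨint (hFIC x hx).1 measurableSet_Ioc
    intro z hz
    have hz0 : z ∈ Ioi (0:ℝ) := hz.1
    rw [← mul_assoc]
    exact mul_le_mul_of_nonneg_right (hK z hz0) (hΨpos z hz0).le
  have hB : (∫ y in Ioi x, K * (r y * Φ y)) ≤ ∫ y in Ioi x, F y * Φ y := by
    apply setIntegral_mono_on hKΦint (hFIC x hx).2 measurableSet_Ioi
    intro z hz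
    have hz0 : z ∈ Ioi (0:ℝ) := lt_trans hx0 hz
    rw [← mul_assoc]
    exact mul_le_mul_of_nonneg_right (hK z hz0) (hΦpos z hz0).le
  rw [hRdef x hx]
  have key : φ x * ((K / C) * (ψ' x / p' x)) + ψ x * ((K / C) * (0 - φ' x / p' x)) = K := by
    have hw := hWr x hx
    have hpne := (hp'pos x hx).ne'
    field_simp
    linear_combination K * hw
  calc K = φ x * ((K / C) * (ψ' x / p' x)) + ψ x * ((K / C) * (0 - φ' x / p' x)) := key.symm
    _ = φ x * (∫ y in Ioc (0:ℝ) x, K * (r y * Ψ y)) + ψ x * (∫ y in Ioi x, K * (r y * Φ y)) := by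
        rw [hKΨval, hKΦval]
    _ ≤ φ x * (∫ s in Ioc (0:ℝ) x, F s * Ψ s) + ψ x * (∫ s in Ioi x, F s * Φ s) :=
        add_le_add (mul_le_mul_of_nonneg_left hA (hφpos x hx).le)
          (mul_le_mul_of_nonneg_left hB (hψpos x hx).le)
end

section
/- Assume that lim_{x↓0} ψ'(x)/p'(x) = 0, lim_{x↑∞} φ'(x)/p'(x) = 0, and that 0 is a natural boundary point in the sense that lim_{x↓0} ψ(x) = 0. Let F : (0,∞) → ℝ be a Borel function satisfying condition (IC). Then, with limits taken in the extended reals, liminf_{x↓0} F(x)/r(x) ≤ liminf_{x↓0} R_F(x) ≤ limsup_{x↓0} R_F(x) ≤ limsup_{x↓0} F(x)/r(x). -/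
open Filter Set MeasureTheory Topology

lemma key_aux
    (b σ r : ℝ → ℝ) (r₀ : ℝ)
    (hbc : ContinuousOn b (Ioi 0))
    (hσc : ContinuousOn σ (Ioi 0))
    (hrc : ContinuousOn r (Ioi 0))
    (hσpos : ∀ x ∈ Ioi (0:ℝ), 0 < σ x)
    (hr₀ : 0 < r₀)
    (hrbd : ∀ x ∈ Ioi (0:ℝ), r₀ ≤ r x)
    (p' : ℝ → ℝ)
    (hp' : ∀ x ∈ Ioi (0:ℝ), p' x = Real.exp (-(2:ℝ) * ∫ s in (1:ℝ)..x, b s / (σ s) ^ 2))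
    (φ ψ φ' ψ' φ'' ψ'' : ℝ → ℝ)
    (hφ1 : ∀ x ∈ Ioi (0:ℝ), HasDerivAt φ (φ' x) x)
    (hφ2 : ∀ x ∈ Ioi (0:ℝ), HasDerivAt φ' (φ'' x) x)
    (hψ1 : ∀ x ∈ Ioi (0:ℝ), HasDerivAt ψ (ψ' x) x)
    (hψ2 : ∀ x ∈ Ioi (0:ℝ), HasDerivAt ψ' (ψ'' x) x)
    (hφpos : ∀ x ∈ Ioi (0:ℝ), 0 < φ x)
    (hψpos : ∀ x ∈ Ioi (0:ℝ), 0 < ψ x)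
    (hψ'pos : ∀ x ∈ Ioi (0:ℝ), 0 < ψ' x)
    (hφODE : ∀ x ∈ Ioi (0:ℝ), (1/2) * σ x ^ 2 * φ'' x + b x * φ' x - r x * φ x = 0)
    (hψODE : ∀ x ∈ Ioi (0:ℝ), (1/2) * σ x ^ 2 * ψ'' x + b x * ψ' x - r x * ψ x = 0)
    (C : ℝ) (hC : 0 < C)
    (hWr : ∀ x ∈ Ioi (0:ℝ), φ x * ψ' x - φ' x * ψ x = C * p' x)
    (Ψ Φ : ℝ → ℝ)
    (hΨ : ∀ x ∈ Ioi (0:ℝ), Ψ x = 2 * ψ x / (C * σ x ^ 2 * p' x))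
    (hΦ : ∀ x ∈ Ioi (0:ℝ), Φ x = 2 * φ x / (C * σ x ^ 2 * p' x))
    (hψ'p'0 : Tendsto (fun x => ψ' x / p' x) (𝓝[>] (0:ℝ)) (𝓝 0))
    (hφ'p'T : Tendsto (fun x => φ' x / p' x) atTop (𝓝 0))
    (hψ0 : Tendsto ψ (𝓝[>] (0:ℝ)) (𝓝 0))
    (F : ℝ → ℝ)
    (hFIC : ∀ x ∈ Ioi (0:ℝ),
      IntegrableOn (fun s => F s * Ψ s) (Ioc 0 x) ∧
      IntegrableOn (fun s => F s * Φ s) (Ioi x))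
    (R : ℝ → ℝ)
    (hRdef : ∀ x ∈ Ioi (0:ℝ),
      R x = φ x * (∫ s in Ioc (0:ℝ) x, F s * Ψ s) + ψ x * (∫ s in Ioi x, F s * Φ s)) :
    limsup (fun x => ((R x : ℝ) : EReal)) (𝓝[>] (0:ℝ)) ≤
      limsup (fun x => ((F x / r x : ℝ) : EReal)) (𝓝[>] (0:ℝ)) := by
  have hp'pos : ∀ x ∈ Ioi (0:ℝ), 0 < p' x := fun x hx => by
    rw [hp' x hx]; exact Real.exp_pos _
  have hσne : ∀ x ∈ Ioi (0:ℝ), σ x ^ 2 ≠ 0 := fun x hx => pow_ne_zero 2 (hσpos x hx).ne'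
  have hCp' : ∀ x ∈ Ioi (0:ℝ), C * p' x ≠ 0 := fun x hx =>
    (mul_pos hC (hp'pos x hx)).ne'
  -- continuity of b/σ²
  have hbσc : ContinuousOn (fun s => b s / σ s ^ 2) (Ioi 0) :=
    hbc.div (hσc.pow 2) hσne
  -- derivative of p'
  have hp'd : ∀ x ∈ Ioi (0:ℝ), HasDerivAt p' (p' x * (-2 * (b x / σ x ^ 2))) x := by
    intro x hx
    have hsub : uIcc (1:ℝ) x ⊆ Ioi 0 := fun y hy =>
      lt_of_lt_of_le (lt_min one_pos hx) hy.1
    have hq : HasDerivAt (fun y => ∫ s in (1:ℝ)..y, b s / σ s ^ 2) (b x / σ x ^ 2) x :=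
      intervalIntegral.integral_hasDerivAt_right
        ((hbσc.mono hsub).intervalIntegrable)
        (hbσc.stronglyMeasurableAtFilter isOpen_Ioi x hx)
        (hbσc.continuousAt (Ioi_mem_nhds hx))
    have h1 : HasDerivAt (fun y => Real.exp (-(2:ℝ) * ∫ s in (1:ℝ)..y, b s / σ s ^ 2))
        (Real.exp (-(2:ℝ) * ∫ s in (1:ℝ)..x, b s / σ s ^ 2) * (-(2:ℝ) * (b x / σ x ^ 2))) x := by
      simpa [mul_comm] using (hq.const_mul (-(2:ℝ))).exp
    have heq : p' =ᶠ[𝓝 x] fun y => Real.exp (-(2:ℝ) * ∫ s in (1:ℝ)..y, b s / σ s ^ 2) :=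
      eventually_of_mem (Ioi_mem_nhds hx) (fun y hy => hp' y hy)
    have h2 := h1.congr_of_eventuallyEq heq
    rw [hp' x hx]
    exact h2
  -- G and H
  set G : ℝ → ℝ := fun s => ψ' s / (C * p' s) with hGdef
  set H : ℝ → ℝ := fun s => φ' s / (C * p' s) with hHdef
  have hGd : ∀ x ∈ Ioi (0:ℝ), HasDerivAt G (r x * Ψ x) x := by
    intro x hx
    have hd := (hψ2 x hx).div ((hp'd x hx).const_mul C) (hCp' x hx)
    refine hd.congr_deriv (Eq.symm ?_)
    rw [hΨ x hx]
    have h1 := hσne x hx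
    have h2 := (hp'pos x hx).ne'
    have h3 := hC.ne'
    have hODE := hψODE x hx
    have h0 := (hσpos x hx).ne'
    field_simp
    linear_combination (-2) * hODE
  have hHd : ∀ x ∈ Ioi (0:ℝ), HasDerivAt H (r x * Φ x) x := by
    intro x hx
    have hd := (hφ2 x hx).div ((hp'd x hx).const_mul C) (hCp' x hx)
    refine hd.congr_deriv (Eq.symm ?_)
    rw [hΦ x hx]
    have h1 := hσne x hx
    have h2 := (hp'pos x hx).ne'
    have h3 := hC.ne'
    have hODE := hφODE x hx
    have h0 := (hσpos x hx).ne'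
    field_simp
    linear_combination (-2) * hODE
  -- positivity of Ψ, Φ
  have hΨpos : ∀ x ∈ Ioi (0:ℝ), 0 < Ψ x := fun x hx => by
    rw [hΨ x hx]
    exact div_pos (by linarith [hψpos x hx])
      (mul_pos (mul_pos hC (pow_pos (hσpos x hx) 2)) (hp'pos x hx))
  have hΦpos : ∀ x ∈ Ioi (0:ℝ), 0 < Φ x := fun x hx => by
    rw [hΦ x hx]
    exact div_pos (by linarith [hφpos x hx])
      (mul_pos (mul_pos hC (pow_pos (hσpos x hx) 2)) (hp'pos x hx))
  have hrpos : ∀ x ∈ Ioi (0:ℝ), 0 < r x := fun x hx => lt_of_lt_of_le hr₀ (hrbd x hx)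
  -- continuity of r·Ψ on Ioi 0
  have hp'c : ContinuousOn p' (Ioi 0) := fun x hx =>
    ((hp'd x hx).continuousAt).continuousWithinAt
  have hψc : ContinuousOn ψ (Ioi 0) := fun x hx =>
    ((hψ1 x hx).continuousAt).continuousWithinAt
  have hrΨc : ContinuousOn (fun s => r s * Ψ s) (Ioi 0) := by
    have h1 : ContinuousOn (fun s => r s * (2 * ψ s / (C * σ s ^ 2 * p' s))) (Ioi 0) :=
      hrc.mul ((continuousOn_const.mul hψc).div
        ((continuousOn_const.mul (hσc.pow 2)).mul hp'c)
        (fun x hx => mul_ne_zero (mul_ne_zero hC.ne' (hσne x hx)) (hp'pos x hx).ne'))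
    exact h1.congr (fun x hx => by rw [hΨ x hx])
  -- G and H limits
  have hG0 : Tendsto G (𝓝[>] (0:ℝ)) (𝓝 0) := by
    have : G = fun s => ψ' s / p' s / C := by
      funext s; rw [hGdef]; rw [div_div, mul_comm]
    rw [this]
    simpa using hψ'p'0.div_const C
  have hHT : Tendsto H atTop (𝓝 0) := by
    have : H = fun s => φ' s / p' s / C := by
      funext s; rw [hHdef]; rw [div_div, mul_comm]
    rw [this]
    simpa using hφ'p'T.div_const C
  have hGpos : ∀ x ∈ Ioi (0:ℝ), 0 < G x := fun x hx =>
    div_pos (hψ'pos x hx) (mul_pos hC (hp'pos x hx))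
  -- improper integral on Ioi x
  have hIoi : ∀ x ∈ Ioi (0:ℝ), IntegrableOn (fun s => r s * Φ s) (Ioi x) ∧
      (∫ s in Ioi x, r s * Φ s) = -H x := by
    intro x hx
    have hcont : ContinuousWithinAt H (Ici x) x :=
      ((hHd x hx).continuousAt).continuousWithinAt
    have hderiv : ∀ y ∈ Ioi x, HasDerivAt H (r y * Φ y) y := fun y hy =>
      hHd y (lt_trans hx hy : (0:ℝ) < y)
    have hnn : ∀ y ∈ Ioi x, 0 ≤ r y * Φ y := fun y hy =>
      le_of_lt (mul_pos (hrpos y (lt_trans hx hy : (0:ℝ) < y)) (hΦpos y (lt_trans hx hy : (0:ℝ) < y)))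
    have hint := integrableOn_Ioi_deriv_of_nonneg hcont hderiv hnn hHT
    refine ⟨hint, ?_⟩
    rw [integral_Ioi_of_hasDerivAt_of_tendsto hcont hderiv hint hHT, zero_sub]
  -- improper integral on Ioc 0 x
  have hIoc : ∀ x ∈ Ioi (0:ℝ), IntegrableOn (fun s => r s * Ψ s) (Ioc 0 x) ∧
      (∫ s in Ioc (0:ℝ) x, r s * Ψ s) = G x := by
    intro x hx
    set a : ℕ → ℝ := fun n => x / (n + 1) with hadef
    have hapos : ∀ n, 0 < a n := fun n => div_pos hx (by positivity)
    have halex : ∀ n, a n ≤ x := fun n =>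
      div_le_self (le_of_lt hx) (le_add_of_nonneg_left (Nat.cast_nonneg n))
    have ha0 : Tendsto a atTop (𝓝 0) := by
      apply Tendsto.div_atTop (tendsto_const_nhds)
      exact tendsto_atTop_add_const_right _ 1 tendsto_natCast_atTop_atTop
    have hfi : ∀ n, IntegrableOn (fun s => r s * Ψ s) (Ioc (a n) x) := by
      intro n
      apply IntegrableOn.mono_set _ Ioc_subset_Icc_self
      apply (hrΨc.mono _).integrableOn_Icc
      intro y hy; exact lt_of_lt_of_le (hapos n) hy.1
    have hval : ∀ n, (∫ s in Ioc (a n) x, r s * Ψ s) = G x - G (a n) := by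
      intro n
      rw [← intervalIntegral.integral_of_le (halex n)]
      apply intervalIntegral.integral_eq_sub_of_hasDerivAt
      · intro y hy
        rw [uIcc_of_le (halex n)] at hy
        exact hGd y (lt_of_lt_of_le (hapos n) hy.1)
      · exact (intervalIntegrable_iff_integrableOn_Ioc_of_le (halex n)).mpr (hfi n)
    have hbound : ∀ n, (∫ s in Ioc (a n) x, ‖r s * Ψ s‖) ≤ G x := by
      intro n
      have h1 : (∫ s in Ioc (a n) x, ‖r s * Ψ s‖) = ∫ s in Ioc (a n) x, r s * Ψ s := by
        apply setIntegral_congr_fun measurableSet_Ioc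
        intro s hs
        exact Real.norm_of_nonneg (le_of_lt (mul_pos
          (hrpos s (lt_of_lt_of_le (hapos n) hs.1.le))
          (hΨpos s (lt_of_lt_of_le (hapos n) hs.1.le))))
      rw [h1, hval n]
      have := hGpos (a n) (hapos n)
      linarith
    have hint : IntegrableOn (fun s => r s * Ψ s) (Ioc 0 x) :=
      integrableOn_Ioc_of_intervalIntegral_norm_bounded_left hfi ha0
        (Eventually.of_forall hbound)
    refine ⟨hint, ?_⟩
    have hmono : Monotone (fun n => Ioc (a n) x) := by
      intro m n hmn
      apply Ioc_subset_Ioc_left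
      have h1 : ((m:ℝ) + 1) ≤ (n:ℝ) + 1 := by
        have : (m:ℝ) ≤ n := Nat.cast_le.mpr hmn
        linarith
      exact div_le_div_of_nonneg_left (le_of_lt hx) (by positivity) h1
    have hunion : (⋃ n, Ioc (a n) x) = Ioc 0 x := by
      apply Subset.antisymm (iUnion_subset fun n => Ioc_subset_Ioc_left (hapos n).le)
      intro s hs
      obtain ⟨n, hn⟩ := (ha0.eventually (gt_mem_nhds hs.1)).exists
      exact mem_iUnion.2 ⟨n, hn, hs.2⟩
    have h1 : Tendsto (fun n => ∫ s in Ioc (a n) x, r s * Ψ s) atTop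
        (𝓝 (∫ s in Ioc (0:ℝ) x, r s * Ψ s)) := by
      have := tendsto_setIntegral_of_monotone (fun n => measurableSet_Ioc) hmono
        (hunion ▸ hint)
      rwa [hunion] at this
    have h2 : Tendsto (fun n => ∫ s in Ioc (a n) x, r s * Ψ s) atTop (𝓝 (G x)) := by
      simp_rw [hval]
      have hGa : Tendsto (fun n => G (a n)) atTop (𝓝 0) :=
        hG0.comp (tendsto_nhdsWithin_iff.mpr ⟨ha0, Eventually.of_forall hapos⟩)
      simpa using tendsto_const_nhds.sub hGa
    exact tendsto_nhds_unique h1 h2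
  -- Wronskian combination
  have hW1 : ∀ x ∈ Ioi (0:ℝ), φ x * G x - ψ x * H x = 1 := by
    intro x hx
    have hw := hWr x hx
    rw [hGdef, hHdef]
    have h2 := (hp'pos x hx).ne'
    have h3 := hC.ne'
    field_simp
    linear_combination hw
  -- main bound
  have main : ∀ ℓ : ℝ, limsup (fun x => ((F x / r x : ℝ) : EReal)) (𝓝[>] (0:ℝ)) < (ℓ : EReal) →
      limsup (fun x => ((R x : ℝ) : EReal)) (𝓝[>] (0:ℝ)) ≤ (ℓ : EReal) := by
    intro ℓ hℓ
    have hev : ∀ᶠ x in 𝓝[>] (0:ℝ), F x ≤ ℓ * r x := by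
      have h1 := eventually_lt_of_limsup_lt hℓ
      filter_upwards [h1, self_mem_nhdsWithin] with x h2 h3
      have h4 : F x / r x < ℓ := by exact_mod_cast h2
      have h5 := hrpos x h3
      linarith [(div_lt_iff₀ h5).1 h4]
    obtain ⟨δ, hδ0, hδ⟩ := mem_nhdsGT_iff_exists_Ioo_subset.1 hev
    set c := δ / 2 with hcdef
    have hc0 : (0:ℝ) < c := half_pos hδ0
    have hcδ : c < δ := half_lt_self hδ0
    have hcmem : c ∈ Ioi (0:ℝ) := hc0
    set M := ∫ s in Ioi c, r s * Φ s with hMdef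
    set K := ∫ s in Ioi c, F s * Φ s with hKdef
    have hble : ∀ x ∈ Ioo (0:ℝ) c, R x ≤ ℓ + ψ x * (K - ℓ * M) := by
      intro x hx
      have hx0 : x ∈ Ioi (0:ℝ) := hx.1
      have hxc : x < c := hx.2
      have hsubδ : Ioc (0:ℝ) x ⊆ Ioo 0 δ := fun s hs =>
        ⟨hs.1, lt_of_le_of_lt hs.2 (lt_trans hxc hcδ)⟩
      have hA : (∫ s in Ioc (0:ℝ) x, F s * Ψ s) ≤ ℓ * G x := by
        have h1 : (∫ s in Ioc (0:ℝ) x, F s * Ψ s) ≤ ∫ s in Ioc (0:ℝ) x, ℓ * (r s * Ψ s) := by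
          apply setIntegral_mono_on (hFIC x hx0).1 ((hIoc x hx0).1.const_mul ℓ) measurableSet_Ioc
          intro s hs
          have hs0 : s ∈ Ioi (0:ℝ) := hs.1
          have h2 : F s ≤ ℓ * r s := hδ (hsubδ hs)
          have h3 : 0 ≤ Ψ s := (hΨpos s hs0).le
          calc F s * Ψ s ≤ (ℓ * r s) * Ψ s := mul_le_mul_of_nonneg_right h2 h3
            _ = ℓ * (r s * Ψ s) := by ring
        rwa [integral_const_mul ℓ _, (hIoc x hx0).2] at h1
      have hFΦIoc : IntegrableOn (fun s => F s * Φ s) (Ioc x c) :=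
        (hFIC x hx0).2.mono_set (fun s hs => hs.1)
      have hrΦIoc : IntegrableOn (fun s => r s * Φ s) (Ioc x c) :=
        (hIoi x hx0).1.mono_set (fun s hs => hs.1)
      have hsplitF := setIntegral_union (μ := volume) (Ioc_disjoint_Ioi le_rfl)
        measurableSet_Ioi hFΦIoc ((hFIC c hcmem).2)
      rw [Ioc_union_Ioi_eq_Ioi hxc.le] at hsplitF
      have hsplitr := setIntegral_union (μ := volume) (Ioc_disjoint_Ioi le_rfl)
        measurableSet_Ioi hrΦIoc ((hIoi c hcmem).1)
      rw [Ioc_union_Ioi_eq_Ioi hxc.le] at hsplitr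
      have hrIocval : (∫ s in Ioc x c, r s * Φ s) = -H x - M := by
        have h0 := (hIoi x hx0).2
        rw [h0] at hsplitr
        rw [← hMdef] at hsplitr
        linarith
      have hB : (∫ s in Ioc x c, F s * Φ s) ≤ ℓ * (-H x - M) := by
        have h1 : (∫ s in Ioc x c, F s * Φ s) ≤ ∫ s in Ioc x c, ℓ * (r s * Φ s) := by
          apply setIntegral_mono_on hFΦIoc (hrΦIoc.const_mul ℓ) measurableSet_Ioc
          intro s hs
          have hs0 : s ∈ Ioi (0:ℝ) := lt_trans hx0 hs.1
          have h2 : F s ≤ ℓ * r s := hδ ⟨hs0, lt_of_le_of_lt hs.2 hcδ⟩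
          have h3 : 0 ≤ Φ s := (hΦpos s hs0).le
          calc F s * Φ s ≤ (ℓ * r s) * Φ s := mul_le_mul_of_nonneg_right h2 h3
            _ = ℓ * (r s * Φ s) := by ring
        rwa [integral_const_mul ℓ _, hrIocval] at h1
      have hRx := hRdef x hx0
      rw [hsplitF] at hRx
      have hφx := hφpos x hx0
      have hψx := hψpos x hx0
      have hw := hW1 x hx0
      have e1 : φ x * (∫ s in Ioc (0:ℝ) x, F s * Ψ s) ≤ φ x * (ℓ * G x) :=
        mul_le_mul_of_nonneg_left hA hφx.le
      have e2 : ψ x * ((∫ s in Ioc x c, F s * Φ s) + K) ≤ ψ x * (ℓ * (-H x - M) + K) :=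
        mul_le_mul_of_nonneg_left (by linarith) hψx.le
      calc R x ≤ φ x * (ℓ * G x) + ψ x * (ℓ * (-H x - M) + K) := by
            rw [hRx]; exact add_le_add e1 e2
        _ = ℓ * (φ x * G x - ψ x * H x) + ψ x * (K - ℓ * M) := by ring
        _ = ℓ + ψ x * (K - ℓ * M) := by rw [hw]; ring
    have hev2 : ∀ᶠ x in 𝓝[>] (0:ℝ),
        ((R x : ℝ) : EReal) ≤ ((ℓ + ψ x * (K - ℓ * M) : ℝ) : EReal) := by
      filter_upwards [Ioo_mem_nhdsGT_of_mem (Set.left_mem_Ico.mpr hc0)] with x hx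
      exact EReal.coe_le_coe_iff.2 (hble x hx)
    have h2 : Tendsto (fun x => ((ℓ + ψ x * (K - ℓ * M) : ℝ) : EReal)) (𝓝[>] (0:ℝ))
        (𝓝 ((ℓ:ℝ) : EReal)) := by
      rw [EReal.tendsto_coe]
      have h3 : Tendsto (fun x => ℓ + ψ x * (K - ℓ * M)) (𝓝[>] (0:ℝ))
          (𝓝 (ℓ + 0 * (K - ℓ * M))) :=
        (tendsto_const_nhds : Tendsto (fun _ : ℝ => ℓ) _ _).add (hψ0.mul_const (K - ℓ * M))
      simpa using h3
    calc limsup (fun x => ((R x : ℝ) : EReal)) (𝓝[>] (0:ℝ))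
        ≤ limsup (fun x => ((ℓ + ψ x * (K - ℓ * M) : ℝ) : EReal)) (𝓝[>] (0:ℝ)) :=
          limsup_le_limsup hev2
      _ = ((ℓ:ℝ) : EReal) := h2.limsup_eq
  by_contra hcon
  push_neg at hcon
  obtain ⟨z, hz1, hz2⟩ := EReal.exists_between_coe_real hcon
  exact absurd (main z hz1) (not_le.mpr hz2)

theorem stmt_3
    (b σ r : ℝ → ℝ) (r₀ r₁ : ℝ)
    (hbc : ContinuousOn b (Ioi 0))
    (hσc : ContinuousOn σ (Ioi 0))
    (hrc : ContinuousOn r (Ioi 0))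
    (hσpos : ∀ x ∈ Ioi (0:ℝ), 0 < σ x)
    (hr₀ : 0 < r₀) (hr₀₁ : r₀ ≤ r₁)
    (hrbd : ∀ x ∈ Ioi (0:ℝ), r₀ ≤ r x ∧ r x ≤ r₁)
    (p' : ℝ → ℝ)
    (hp' : ∀ x ∈ Ioi (0:ℝ), p' x = Real.exp (-(2:ℝ) * ∫ s in (1:ℝ)..x, b s / (σ s) ^ 2))
    (φ ψ φ' ψ' φ'' ψ'' : ℝ → ℝ)
    (hφ1 : ∀ x ∈ Ioi (0:ℝ), HasDerivAt φ (φ' x) x)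
    (hφ2 : ∀ x ∈ Ioi (0:ℝ), HasDerivAt φ' (φ'' x) x)
    (hφ2c : ContinuousOn φ'' (Ioi 0))
    (hψ1 : ∀ x ∈ Ioi (0:ℝ), HasDerivAt ψ (ψ' x) x)
    (hψ2 : ∀ x ∈ Ioi (0:ℝ), HasDerivAt ψ' (ψ'' x) x)
    (hψ2c : ContinuousOn ψ'' (Ioi 0))
    (hφpos : ∀ x ∈ Ioi (0:ℝ), 0 < φ x)
    (hφ'neg : ∀ x ∈ Ioi (0:ℝ), φ' x < 0)
    (hψpos : ∀ x ∈ Ioi (0:ℝ), 0 < ψ x)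
    (hψ'pos : ∀ x ∈ Ioi (0:ℝ), 0 < ψ' x)
    (hφODE : ∀ x ∈ Ioi (0:ℝ), (1/2) * σ x ^ 2 * φ'' x + b x * φ' x - r x * φ x = 0)
    (hψODE : ∀ x ∈ Ioi (0:ℝ), (1/2) * σ x ^ 2 * ψ'' x + b x * ψ' x - r x * ψ x = 0)
    (C : ℝ) (hC : 0 < C)
    (hWr : ∀ x ∈ Ioi (0:ℝ), φ x * ψ' x - φ' x * ψ x = C * p' x)
    (Ψ Φ : ℝ → ℝ)
    (hΨ : ∀ x ∈ Ioi (0:ℝ), Ψ x = 2 * ψ x / (C * σ x ^ 2 * p' x))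
    (hΦ : ∀ x ∈ Ioi (0:ℝ), Φ x = 2 * φ x / (C * σ x ^ 2 * p' x))
    (hψ'p'0 : Tendsto (fun x => ψ' x / p' x) (𝓝[>] (0:ℝ)) (𝓝 0))
    (hφ'p'T : Tendsto (fun x => φ' x / p' x) atTop (𝓝 0))
    (hψ0 : Tendsto ψ (𝓝[>] (0:ℝ)) (𝓝 0))
    (F : ℝ → ℝ) (hFm : Measurable F)
    (hFIC : ∀ x ∈ Ioi (0:ℝ),
      IntegrableOn (fun s => F s * Ψ s) (Ioc 0 x) ∧
      IntegrableOn (fun s => F s * Φ s) (Ioi x))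
    (R : ℝ → ℝ)
    (hRdef : ∀ x ∈ Ioi (0:ℝ),
      R x = φ x * (∫ s in Ioc (0:ℝ) x, F s * Ψ s) + ψ x * (∫ s in Ioi x, F s * Φ s))
    :
    liminf (fun x => ((F x / r x : ℝ) : EReal)) (𝓝[>] (0:ℝ)) ≤
      liminf (fun x => ((R x : ℝ) : EReal)) (𝓝[>] (0:ℝ)) ∧
    liminf (fun x => ((R x : ℝ) : EReal)) (𝓝[>] (0:ℝ)) ≤
      limsup (fun x => ((R x : ℝ) : EReal)) (𝓝[>] (0:ℝ)) ∧
    limsup (fun x => ((R x : ℝ) : EReal)) (𝓝[>] (0:ℝ)) ≤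
      limsup (fun x => ((F x / r x : ℝ) : EReal)) (𝓝[>] (0:ℝ)) := by
  have hrb : ∀ x ∈ Ioi (0:ℝ), r₀ ≤ r x := fun x hx => (hrbd x hx).1
  have h3 : limsup (fun x => ((R x : ℝ) : EReal)) (𝓝[>] (0:ℝ)) ≤
      limsup (fun x => ((F x / r x : ℝ) : EReal)) (𝓝[>] (0:ℝ)) :=
    key_aux b σ r r₀ hbc hσc hrc hσpos hr₀ hrb p' hp' φ ψ φ' ψ' φ'' ψ''
      hφ1 hφ2 hψ1 hψ2 hφpos hψpos hψ'pos hφODE hψODE C hC hWr Ψ Φ hΨ hΦ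
      hψ'p'0 hφ'p'T hψ0 F hFIC R hRdef
  have hFICn : ∀ x ∈ Ioi (0:ℝ),
      IntegrableOn (fun s => (-F s) * Ψ s) (Ioc 0 x) ∧
      IntegrableOn (fun s => (-F s) * Φ s) (Ioi x) := by
    intro x hx
    constructor
    · simp only [neg_mul]; exact (hFIC x hx).1.neg
    · simp only [neg_mul]; exact (hFIC x hx).2.neg
  have hRdefn : ∀ x ∈ Ioi (0:ℝ),
      (-R x) = φ x * (∫ s in Ioc (0:ℝ) x, (-F s) * Ψ s) +
        ψ x * (∫ s in Ioi x, (-F s) * Φ s) := by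
    intro x hx
    simp only [neg_mul, integral_neg]
    rw [hRdef x hx]
    ring
  have h1' : limsup (fun x => ((-R x : ℝ) : EReal)) (𝓝[>] (0:ℝ)) ≤
      limsup (fun x => ((-F x / r x : ℝ) : EReal)) (𝓝[>] (0:ℝ)) :=
    key_aux b σ r r₀ hbc hσc hrc hσpos hr₀ hrb p' hp' φ ψ φ' ψ' φ'' ψ''
      hφ1 hφ2 hψ1 hψ2 hφpos hψpos hψ'pos hφODE hψODE C hC hWr Ψ Φ hΨ hΦ
      hψ'p'0 hφ'p'T hψ0 (fun x => -F x) hFICn (fun x => -R x) hRdefn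
  have e1 : (fun x => ((-R x : ℝ) : EReal)) = -(fun x => ((R x : ℝ) : EReal)) := by
    funext x; simp [EReal.coe_neg]
  have e2 : (fun x => ((-F x / r x : ℝ) : EReal)) =
      -(fun x => ((F x / r x : ℝ) : EReal)) := by
    funext x; simp [neg_div, EReal.coe_neg]
  rw [e1, e2, EReal.limsup_neg, EReal.limsup_neg, EReal.neg_le_neg_iff] at h1'
  exact ⟨h1', liminf_le_limsup, h3⟩
end

section
/- Assume that lim_{x↓0} ψ'(x)/p'(x) = 0. Let F : (0,∞) → ℝ be a continuous function satisfying condition (IC). Then: (a) for every x > 0, R_F(x) − (R_F'(x)/ψ'(x))·ψ(x) = G_F(x), where R_F'(x) = φ'(x)∫₀ˣ F(s)Ψ(s)ds + ψ'(x)∫ₓ^∞ F(s)Φ(s)ds; and (b) with limits taken in the extended reals, liminf_{x↓0} F(x)/r(x) ≤ liminf_{x↓0} G_F(x) ≤ limsup_{x↓0} G_F(x) ≤ limsup_{x↓0} F(x)/r(x). -/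
open Filter Set MeasureTheory Topology

theorem stmt_4
    (b σ r : ℝ → ℝ) (r₀ r₁ : ℝ)
    (hbc : ContinuousOn b (Ioi 0))
    (hσc : ContinuousOn σ (Ioi 0))
    (hrc : ContinuousOn r (Ioi 0))
    (hσpos : ∀ x ∈ Ioi (0:ℝ), 0 < σ x)
    (hr₀ : 0 < r₀) (hr₀₁ : r₀ ≤ r₁)
    (hrbd : ∀ x ∈ Ioi (0:ℝ), r₀ ≤ r x ∧ r x ≤ r₁)
    (p' : ℝ → ℝ)
    (hp' : ∀ x ∈ Ioi (0:ℝ), p' x = Real.exp (-(2:ℝ) * ∫ s in (1:ℝ)..x, b s / (σ s) ^ 2))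
    (φ ψ φ' ψ' φ'' ψ'' : ℝ → ℝ)
    (hφ1 : ∀ x ∈ Ioi (0:ℝ), HasDerivAt φ (φ' x) x)
    (hφ2 : ∀ x ∈ Ioi (0:ℝ), HasDerivAt φ' (φ'' x) x)
    (hφ2c : ContinuousOn φ'' (Ioi 0))
    (hψ1 : ∀ x ∈ Ioi (0:ℝ), HasDerivAt ψ (ψ' x) x)
    (hψ2 : ∀ x ∈ Ioi (0:ℝ), HasDerivAt ψ' (ψ'' x) x)
    (hψ2c : ContinuousOn ψ'' (Ioi 0))
    (hφpos : ∀ x ∈ Ioi (0:ℝ), 0 < φ x)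
    (hφ'neg : ∀ x ∈ Ioi (0:ℝ), φ' x < 0)
    (hψpos : ∀ x ∈ Ioi (0:ℝ), 0 < ψ x)
    (hψ'pos : ∀ x ∈ Ioi (0:ℝ), 0 < ψ' x)
    (hφODE : ∀ x ∈ Ioi (0:ℝ), (1/2) * σ x ^ 2 * φ'' x + b x * φ' x - r x * φ x = 0)
    (hψODE : ∀ x ∈ Ioi (0:ℝ), (1/2) * σ x ^ 2 * ψ'' x + b x * ψ' x - r x * ψ x = 0)
    (C : ℝ) (hC : 0 < C)
    (hWr : ∀ x ∈ Ioi (0:ℝ), φ x * ψ' x - φ' x * ψ x = C * p' x)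
    (Ψ Φ : ℝ → ℝ)
    (hΨ : ∀ x ∈ Ioi (0:ℝ), Ψ x = 2 * ψ x / (C * σ x ^ 2 * p' x))
    (hΦ : ∀ x ∈ Ioi (0:ℝ), Φ x = 2 * φ x / (C * σ x ^ 2 * p' x))
    (hψ'p'0 : Tendsto (fun x => ψ' x / p' x) (𝓝[>] (0:ℝ)) (𝓝 0))
    (F : ℝ → ℝ) (hFc : ContinuousOn F (Ioi 0))
    (hFIC : ∀ x ∈ Ioi (0:ℝ),
      IntegrableOn (fun s => F s * Ψ s) (Ioc 0 x) ∧
      IntegrableOn (fun s => F s * Φ s) (Ioi x))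
    (R : ℝ → ℝ)
    (hRdef : ∀ x ∈ Ioi (0:ℝ),
      R x = φ x * (∫ s in Ioc (0:ℝ) x, F s * Ψ s) + ψ x * (∫ s in Ioi x, F s * Φ s))
    (R' : ℝ → ℝ)
    (hR'def : ∀ x ∈ Ioi (0:ℝ),
      R' x = φ' x * (∫ s in Ioc (0:ℝ) x, F s * Ψ s) + ψ' x * (∫ s in Ioi x, F s * Φ s))
    (G : ℝ → ℝ)
    (hGdef : ∀ x ∈ Ioi (0:ℝ), G x = C * p' x / ψ' x * ∫ s in Ioc (0:ℝ) x, F s * Ψ s)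
    :
    (∀ x ∈ Ioi (0:ℝ), R x - R' x / ψ' x * ψ x = G x) ∧
    liminf (fun x => ((F x / r x : ℝ) : EReal)) (𝓝[>] (0:ℝ)) ≤
      liminf (fun x => ((G x : ℝ) : EReal)) (𝓝[>] (0:ℝ)) ∧
    liminf (fun x => ((G x : ℝ) : EReal)) (𝓝[>] (0:ℝ)) ≤
      limsup (fun x => ((G x : ℝ) : EReal)) (𝓝[>] (0:ℝ)) ∧
    limsup (fun x => ((G x : ℝ) : EReal)) (𝓝[>] (0:ℝ)) ≤
      limsup (fun x => ((F x / r x : ℝ) : EReal)) (𝓝[>] (0:ℝ)) := by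
  -- basic positivity facts
  have hp'pos : ∀ x ∈ Ioi (0:ℝ), 0 < p' x := fun x hx => by
    rw [hp' x hx]; exact Real.exp_pos _
  have hΨpos : ∀ x ∈ Ioi (0:ℝ), 0 < Ψ x := fun x hx => by
    rw [hΨ x hx]
    have h1 := hψpos x hx; have h2 := hσpos x hx; have h3 := hp'pos x hx
    positivity
  have hrpos : ∀ x ∈ Ioi (0:ℝ), 0 < r x := fun x hx => lt_of_lt_of_le hr₀ (hrbd x hx).1
  -- continuity facts
  have hφc : ContinuousOn φ (Ioi 0) := fun x hx => (hφ1 x hx).continuousAt.continuousWithinAt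
  have hψc : ContinuousOn ψ (Ioi 0) := fun x hx => (hψ1 x hx).continuousAt.continuousWithinAt
  have hφ'c : ContinuousOn φ' (Ioi 0) := fun x hx => (hφ2 x hx).continuousAt.continuousWithinAt
  have hψ'c : ContinuousOn ψ' (Ioi 0) := fun x hx => (hψ2 x hx).continuousAt.continuousWithinAt
  have hp'c : ContinuousOn p' (Ioi 0) := by
    have : ContinuousOn (fun x => (φ x * ψ' x - φ' x * ψ x) / C) (Ioi 0) :=
      ((hφc.mul hψ'c).sub (hφ'c.mul hψc)).div_const C
    refine this.congr fun x hx => ?_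
    show p' x = (φ x * ψ' x - φ' x * ψ x) / C
    rw [hWr x hx, mul_div_cancel_left₀ _ hC.ne']
  have hΨc : ContinuousOn Ψ (Ioi 0) := by
    have : ContinuousOn (fun x => 2 * ψ x / (C * σ x ^ 2 * p' x)) (Ioi 0) := by
      refine (continuousOn_const.mul hψc).div
        ((continuousOn_const.mul (hσc.pow 2)).mul hp'c) fun x hx => ?_
      have h2 := (hσpos x hx).ne'; have h3 := (hp'pos x hx).ne'
      positivity
    exact this.congr fun x hx => hΨ x hx
  set g : ℝ → ℝ := fun s => C * r s * Ψ s with hg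
  have hgc : ContinuousOn g (Ioi 0) := (continuousOn_const.mul hrc).mul hΨc
  have hgpos : ∀ x ∈ Ioi (0:ℝ), 0 < g x := fun x hx =>
    mul_pos (mul_pos hC (hrpos x hx)) (hΨpos x hx)
  -- p' has derivative
  have hp'd : ∀ x ∈ Ioi (0:ℝ), HasDerivAt p' (-(2 * b x / σ x ^ 2) * p' x) x := by
    intro x hx
    have h1 : HasDerivAt (fun y => (φ y * ψ' y - φ' y * ψ y) / C)
        ((φ' x * ψ' x + φ x * ψ'' x - (φ'' x * ψ x + φ' x * ψ' x)) / C) x :=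
      (((hφ1 x hx).mul (hψ2 x hx)).sub ((hφ2 x hx).mul (hψ1 x hx))).div_const C
    have heq : p' =ᶠ[𝓝 x] fun y => (φ y * ψ' y - φ' y * ψ y) / C := by
      filter_upwards [isOpen_Ioi.mem_nhds hx] with y hy
      rw [hWr y hy, mul_div_cancel_left₀ _ hC.ne']
    have h2 := h1.congr_of_eventuallyEq heq
    refine h2.congr_deriv ?_
    have e1 := hφODE x hx; have e2 := hψODE x hx; have e3 := hWr x hx
    have hσne : σ x ≠ 0 := (hσpos x hx).ne'
    field_simp
    linear_combination (-(2 * ψ x)) * e1 + (2 * φ x) * e2 - (2 * b x) * e3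
  -- derivative of ψ'/p'
  have hhd : ∀ x ∈ Ioi (0:ℝ), HasDerivAt (fun y => ψ' y / p' y) (g x) x := by
    intro x hx
    have h1 := (hψ2 x hx).div (hp'd x hx) (hp'pos x hx).ne'
    refine h1.congr_deriv ?_
    have e2 := hψODE x hx
    have hσne : σ x ≠ 0 := (hσpos x hx).ne'
    have hp'ne : p' x ≠ 0 := (hp'pos x hx).ne'
    show _ = C * r x * Ψ x
    rw [hΨ x hx]
    field_simp
    linear_combination 2 * e2
  -- the key integral identity : ∫_{(0,x]} g = ψ'(x)/p'(x)
  have keyInt : ∀ x ∈ Ioi (0:ℝ), IntegrableOn g (Ioc 0 x) ∧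
      (∫ s in Ioc (0:ℝ) x, g s) = ψ' x / p' x := by
    intro x hx
    set a : ℕ → ℝ := fun n => x / (n + 2) with ha
    have hapos : ∀ n, 0 < a n := fun n => by
      have : (0:ℝ) < (n:ℝ) + 2 := by positivity
      exact div_pos hx this
    have halex : ∀ n, a n ≤ x := fun n => by
      apply div_le_self (le_of_lt hx)
      have : (0:ℝ) ≤ (n:ℝ) := Nat.cast_nonneg n
      linarith
    have hatend : Tendsto a atTop (𝓝 0) := by
      apply Tendsto.div_atTop (tendsto_const_nhds (x := x))
      exact tendsto_atTop_add_const_right _ 2 tendsto_natCast_atTop_atTop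
    have hsub : ∀ n, Icc (a n) x ⊆ Ioi (0:ℝ) := fun n s hs => lt_of_lt_of_le (hapos n) hs.1
    have hsub' : ∀ n, Ioc (a n) x ⊆ Ioi (0:ℝ) := fun n s hs => lt_trans (hapos n) hs.1
    have hfi : ∀ n, IntegrableOn g (Ioc (a n) x) := fun n =>
      ((hgc.mono (hsub n)).integrableOn_Icc).mono_set Ioc_subset_Icc_self
    have hftc : ∀ n, ∫ s in (a n)..x, g s = ψ' x / p' x - ψ' (a n) / p' (a n) := by
      intro n
      apply intervalIntegral.integral_eq_sub_of_hasDerivAt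
      · intro t ht
        rw [uIcc_of_le (halex n)] at ht
        exact hhd t (hsub n ht)
      · rw [intervalIntegrable_iff, uIoc_of_le (halex n)]
        exact hfi n
    have hIoc : ∀ n, ∫ s in Ioc (a n) x, g s = ψ' x / p' x - ψ' (a n) / p' (a n) := by
      intro n
      rw [← intervalIntegral.integral_of_le (halex n)]
      exact hftc n
    have hhnonneg : ∀ y ∈ Ioi (0:ℝ), 0 ≤ ψ' y / p' y := fun y hy =>
      le_of_lt (div_pos (hψ'pos y hy) (hp'pos y hy))
    have hint : IntegrableOn g (Ioc 0 x) := by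
      apply integrableOn_Ioc_of_intervalIntegral_norm_bounded_left
        (I := ψ' x / p' x) (a := a) (l := atTop) hfi hatend
      filter_upwards with n
      have : ∀ s ∈ Ioc (a n) x, ‖g s‖ = g s := fun s hs =>
        Real.norm_of_nonneg (le_of_lt (hgpos s (hsub' n hs)))
      rw [setIntegral_congr_fun measurableSet_Ioc this, hIoc n]
      have := hhnonneg (a n) (hapos n)
      linarith
    refine ⟨hint, ?_⟩
    -- identify the value via the a.e. cover
    have hcov : AECover (volume.restrict (Ioc (0:ℝ) x)) atTop (fun n => Ioc (a n) x) :=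
      aecover_Ioc_of_Ioc hatend tendsto_const_nhds
    have h1 : Tendsto (fun n => ∫ s in Ioc (a n) x, g s ∂(volume.restrict (Ioc (0:ℝ) x)))
        atTop (𝓝 (∫ s in Ioc (0:ℝ) x, g s)) :=
      hcov.integral_tendsto_of_countably_generated hint
    have h2 : ∀ n, (∫ s in Ioc (a n) x, g s ∂(volume.restrict (Ioc (0:ℝ) x)))
        = ψ' x / p' x - ψ' (a n) / p' (a n) := by
      intro n
      rw [Measure.restrict_restrict measurableSet_Ioc,
        inter_eq_self_of_subset_left (Ioc_subset_Ioc_left (le_of_lt (hapos n)))]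
      exact hIoc n
    have h3 : Tendsto (fun n => ψ' x / p' x - ψ' (a n) / p' (a n)) atTop
        (𝓝 (ψ' x / p' x - 0)) := by
      apply Tendsto.const_sub
      apply hψ'p'0.comp
      exact tendsto_nhdsWithin_of_tendsto_nhds_of_eventually_within a hatend
        (Eventually.of_forall fun n => hapos n)
    rw [sub_zero] at h3
    refine tendsto_nhds_unique (h1.congr ?_) h3
    intro n; rw [h2 n]
  -- eventual upper bound on G
  have hub : ∀ M : ℝ, (∀ᶠ s in 𝓝[>] (0:ℝ), F s < M * r s) →
      ∀ᶠ x in 𝓝[>] (0:ℝ), G x ≤ M := by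
    intro M hM
    obtain ⟨δ, hδ, hδ2⟩ := (nhdsGT_basis (0:ℝ)).eventually_iff.mp hM
    rw [(nhdsGT_basis (0:ℝ)).eventually_iff]
    refine ⟨δ, hδ, fun x hxm => ?_⟩
    have hx : x ∈ Ioi (0:ℝ) := hxm.1
    have hψ'x := hψ'pos x hx; have hp'x := hp'pos x hx
    have hIg := keyInt x hx
    have hcomp : ∀ s ∈ Ioc (0:ℝ) x, F s * Ψ s ≤ (M / C) * g s := by
      intro s hs
      have hsI : s ∈ Ioi (0:ℝ) := hs.1
      have hFs : F s < M * r s := hδ2 ⟨hs.1, lt_of_le_of_lt hs.2 hxm.2⟩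
      have h1 : F s * Ψ s ≤ (M * r s) * Ψ s :=
        mul_le_mul_of_nonneg_right hFs.le (hΨpos s hsI).le
      refine h1.trans (le_of_eq ?_)
      show M * r s * Ψ s = M / C * (C * r s * Ψ s)
      field_simp
    have hmono := setIntegral_mono_on (hFIC x hx).1 (hIg.1.const_mul (M / C))
      measurableSet_Ioc hcomp
    rw [integral_const_mul, hIg.2] at hmono
    rw [hGdef x hx]
    have hpos : (0:ℝ) < C * p' x / ψ' x := by positivity
    calc C * p' x / ψ' x * ∫ s in Ioc (0:ℝ) x, F s * Ψ s
        ≤ C * p' x / ψ' x * (M / C * (ψ' x / p' x)) :=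
          mul_le_mul_of_nonneg_left hmono hpos.le
      _ = M := by field_simp
  -- eventual lower bound on G
  have hlb : ∀ M : ℝ, (∀ᶠ s in 𝓝[>] (0:ℝ), M * r s < F s) →
      ∀ᶠ x in 𝓝[>] (0:ℝ), M ≤ G x := by
    intro M hM
    obtain ⟨δ, hδ, hδ2⟩ := (nhdsGT_basis (0:ℝ)).eventually_iff.mp hM
    rw [(nhdsGT_basis (0:ℝ)).eventually_iff]
    refine ⟨δ, hδ, fun x hxm => ?_⟩
    have hx : x ∈ Ioi (0:ℝ) := hxm.1
    have hψ'x := hψ'pos x hx; have hp'x := hp'pos x hx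
    have hIg := keyInt x hx
    have hcomp : ∀ s ∈ Ioc (0:ℝ) x, (M / C) * g s ≤ F s * Ψ s := by
      intro s hs
      have hsI : s ∈ Ioi (0:ℝ) := hs.1
      have hFs : M * r s < F s := hδ2 ⟨hs.1, lt_of_le_of_lt hs.2 hxm.2⟩
      have h1 : (M * r s) * Ψ s ≤ F s * Ψ s :=
        mul_le_mul_of_nonneg_right hFs.le (hΨpos s hsI).le
      refine le_trans (le_of_eq ?_) h1
      show M / C * (C * r s * Ψ s) = M * r s * Ψ s
      field_simp
    have hmono := setIntegral_mono_on (hIg.1.const_mul (M / C)) (hFIC x hx).1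
      measurableSet_Ioc hcomp
    rw [integral_const_mul, hIg.2] at hmono
    rw [hGdef x hx]
    have hpos : (0:ℝ) < C * p' x / ψ' x := by positivity
    calc M = C * p' x / ψ' x * (M / C * (ψ' x / p' x)) := by field_simp
      _ ≤ C * p' x / ψ' x * ∫ s in Ioc (0:ℝ) x, F s * Ψ s :=
          mul_le_mul_of_nonneg_left hmono hpos.le
  -- limsup inequality
  have hlimsup : limsup (fun x => ((G x : ℝ) : EReal)) (𝓝[>] (0:ℝ)) ≤
      limsup (fun x => ((F x / r x : ℝ) : EReal)) (𝓝[>] (0:ℝ)) := by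
    apply le_of_forall_gt_imp_ge_of_dense
    intro c hc
    obtain ⟨M', hM1, hM2⟩ := exists_between hc
    lift M' to ℝ using ⟨(hM2.trans_le le_top).ne, (bot_le.trans_lt hM1).ne'⟩
      with m hm
    have hev : ∀ᶠ y in 𝓝[>] (0:ℝ), F y < m * r y := by
      filter_upwards [eventually_lt_of_limsup_lt hM1, self_mem_nhdsWithin] with y h1y h2y
      have hry := hrpos y h2y
      have := EReal.coe_lt_coe_iff.mp h1y
      exact (div_lt_iff₀ hry).mp this
    have hG := hub m hev
    have hG2 : limsup (fun x => ((G x : ℝ) : EReal)) (𝓝[>] (0:ℝ)) ≤ (m : EReal) :=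
      limsup_le_of_le (by isBoundedDefault)
        (hG.mono fun y hy => EReal.coe_le_coe_iff.mpr hy)
    exact hG2.trans hM2.le
  -- liminf inequality
  have hliminf : liminf (fun x => ((F x / r x : ℝ) : EReal)) (𝓝[>] (0:ℝ)) ≤
      liminf (fun x => ((G x : ℝ) : EReal)) (𝓝[>] (0:ℝ)) := by
    apply le_of_forall_lt_imp_le_of_dense
    intro c hc
    obtain ⟨M', hM1, hM2⟩ := exists_between hc
    lift M' to ℝ using ⟨(hM2.trans_le le_top).ne, (bot_le.trans_lt hM1).ne'⟩
      with m hm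
    have hev : ∀ᶠ y in 𝓝[>] (0:ℝ), m * r y < F y := by
      filter_upwards [eventually_lt_of_lt_liminf hM2, self_mem_nhdsWithin] with y h1y h2y
      have hry := hrpos y h2y
      have := EReal.coe_lt_coe_iff.mp h1y
      exact (lt_div_iff₀ hry).mp this
    have hG := hlb m hev
    have hG2 : (m : EReal) ≤ liminf (fun x => ((G x : ℝ) : EReal)) (𝓝[>] (0:ℝ)) :=
      le_liminf_of_le (by isBoundedDefault)
        (hG.mono fun y hy => EReal.coe_le_coe_iff.mpr hy)
    exact hM1.le.trans hG2
  refine ⟨?_, hliminf, liminf_le_limsup, hlimsup⟩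
  -- part (a)
  intro x hx
  rw [hRdef x hx, hR'def x hx, hGdef x hx]
  have hψ'ne : ψ' x ≠ 0 := (hψ'pos x hx).ne'
  field_simp
  linear_combination (∫ s in Ioc (0:ℝ) x, F s * Ψ s) * hWr x hx
end

section
/- Assume that lim_{x↓0} ψ'(x)/p'(x) = 0 and that ∞ is a natural boundary point in the sense that lim_{x↑∞} ψ'(x)/p'(x) = ∞. Let F : (0,∞) → ℝ be a Borel function satisfying condition (IC). Then, with limits taken in the extended reals, liminf_{x↑∞} F(x)/r(x) ≤ liminf_{x↑∞} G_F(x) ≤ limsup_{x↑∞} G_F(x) ≤ limsup_{x↑∞} F(x)/r(x). -/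
open Filter Set MeasureTheory Topology

private lemma ereal_le_of_forall_real {x y : EReal}
    (h : ∀ c : ℝ, y < (c : EReal) → x ≤ (c : EReal)) : x ≤ y := by
  by_contra hxy
  push_neg at hxy
  obtain ⟨c, hyc, hcx⟩ := EReal.exists_between_coe_real hxy
  exact absurd (h c hyc) (not_le.mpr hcx)

private lemma key_limsup
    (r : ℝ → ℝ) (r₀ : ℝ) (hr₀ : 0 < r₀)
    (hrlb : ∀ x ∈ Ioi (0:ℝ), r₀ ≤ r x)
    (hrc : ContinuousOn r (Ioi 0))
    (Ψ : ℝ → ℝ) (hΨpos : ∀ x ∈ Ioi (0:ℝ), 0 < Ψ x)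
    (hΨc : ContinuousOn Ψ (Ioi 0))
    (h : ℝ → ℝ) (C : ℝ) (hC : 0 < C)
    (hh : ∀ x ∈ Ioi (0:ℝ), HasDerivAt h (C * r x * Ψ x) x)
    (hhT : Tendsto h atTop atTop)
    (F : ℝ → ℝ)
    (hFint : ∀ x ∈ Ioi (0:ℝ), IntegrableOn (fun s => F s * Ψ s) (Ioc 0 x))
    (G : ℝ → ℝ)
    (hG : ∀ x ∈ Ioi (0:ℝ), G x = (1 / h x) * (C * ∫ s in Ioc (0:ℝ) x, F s * Ψ s)) :
    limsup (fun x => ((G x : ℝ) : EReal)) atTop ≤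
      limsup (fun x => ((F x / r x : ℝ) : EReal)) atTop := by
  apply ereal_le_of_forall_real
  intro c hc
  have hev : ∀ᶠ x in atTop, ((F x / r x : ℝ) : EReal) < (c : EReal) :=
    eventually_lt_of_limsup_lt hc
  rw [eventually_atTop] at hev
  obtain ⟨x₁, hx₁⟩ := hev
  set x₀ : ℝ := max x₁ 1 with hx₀def
  have hx₀pos : (0:ℝ) < x₀ := lt_of_lt_of_le one_pos (le_max_right _ _)
  have hx₀mem : x₀ ∈ Ioi (0:ℝ) := hx₀pos
  have hFle : ∀ x, x₀ ≤ x → F x ≤ c * r x := by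
    intro x hx
    have hxpos : (0:ℝ) < x := lt_of_lt_of_le hx₀pos hx
    have h1 := hx₁ x (le_trans (le_max_left _ _) hx)
    rw [EReal.coe_lt_coe_iff] at h1
    have hrx : 0 < r x := lt_of_lt_of_le hr₀ (hrlb x hxpos)
    exact le_of_lt ((div_lt_iff₀ hrx).mp h1)
  set A : ℝ := ∫ s in Ioc (0:ℝ) x₀, F s * Ψ s with hA
  -- core bound
  have hbound : ∀ x, x₀ ≤ x → 0 < h x → G x ≤ c + (C * A - c * h x₀) / h x := by
    intro x hx hhx
    have hxpos : (0:ℝ) < x := lt_of_lt_of_le hx₀pos hx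
    have hxmem : x ∈ Ioi (0:ℝ) := hxpos
    have hsub : Icc x₀ x ⊆ Ioi (0:ℝ) := fun t ht => lt_of_lt_of_le hx₀pos ht.1
    have hgc : ContinuousOn (fun s => C * r s * Ψ s) (Icc x₀ x) :=
      ((continuousOn_const.mul (hrc.mono hsub)).mul (hΨc.mono hsub))
    have huIcc : uIcc x₀ x = Icc x₀ x := uIcc_of_le hx
    -- FTC
    have hFTC : ∫ s in x₀..x, C * r s * Ψ s = h x - h x₀ := by
      apply intervalIntegral.integral_eq_sub_of_hasDerivAt
      · intro t ht
        rw [huIcc] at ht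
        exact hh t (hsub ht)
      · apply ContinuousOn.intervalIntegrable
        rw [huIcc]
        exact hgc
    have hIocEq : ∫ s in Ioc x₀ x, C * r s * Ψ s = h x - h x₀ := by
      rw [← intervalIntegral.integral_of_le hx, hFTC]
    -- split integral
    have hint1 : IntegrableOn (fun s => F s * Ψ s) (Ioc 0 x₀) := hFint x₀ hx₀mem
    have hint2 : IntegrableOn (fun s => F s * Ψ s) (Ioc x₀ x) :=
      (hFint x hxmem).mono_set (Ioc_subset_Ioc_left hx₀pos.le)
    have hsplit : ∫ s in Ioc (0:ℝ) x, F s * Ψ s = A + ∫ s in Ioc x₀ x, F s * Ψ s := by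
      rw [← Ioc_union_Ioc_eq_Ioc hx₀pos.le hx,
        setIntegral_union (Ioc_disjoint_Ioc_of_le le_rfl) measurableSet_Ioc hint1 hint2]
    -- comparison
    have hintg : IntegrableOn (fun s => (c / C) * (C * r s * Ψ s)) (Ioc x₀ x) :=
      ((hgc.const_smul (c / C)).integrableOn_Icc).mono_set Ioc_subset_Icc_self
    have hmono : ∫ s in Ioc x₀ x, F s * Ψ s ≤ ∫ s in Ioc x₀ x, (c / C) * (C * r s * Ψ s) := by
      apply setIntegral_mono_on hint2 hintg measurableSet_Ioc
      intro s hs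
      have hsp : (0:ℝ) < s := lt_of_lt_of_le hx₀pos hs.1.le
      have h1 : F s ≤ c * r s := hFle s hs.1.le
      have h2 : 0 < Ψ s := hΨpos s hsp
      have h3 : (c / C) * (C * r s * Ψ s) = (c * r s) * Ψ s := by
        field_simp
      rw [h3]
      exact mul_le_mul_of_nonneg_right h1 h2.le
    have hval : ∫ s in Ioc x₀ x, (c / C) * (C * r s * Ψ s) = (c / C) * (h x - h x₀) := by
      rw [integral_const_mul, hIocEq]
    -- combine
    have hG' := hG x hxmem
    have hfinal : C * ∫ s in Ioc (0:ℝ) x, F s * Ψ s ≤ C * A + c * (h x - h x₀) := by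
      rw [hsplit, mul_add]
      have := mul_le_mul_of_nonneg_left (hmono.trans_eq hval) hC.le
      have h4 : C * ((c / C) * (h x - h x₀)) = c * (h x - h x₀) := by
        field_simp
      linarith [h4 ▸ this]
    rw [hG']
    have h5 : (1 / h x) * (C * ∫ s in Ioc (0:ℝ) x, F s * Ψ s)
        ≤ (1 / h x) * (C * A + c * (h x - h x₀)) :=
      mul_le_mul_of_nonneg_left hfinal (by positivity)
    apply h5.trans_eq
    field_simp
    ring
  -- conclude limsup ≤ c
  apply ereal_le_of_forall_real
  intro d hd
  rw [EReal.coe_lt_coe_iff] at hd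
  set ε : ℝ := d - c with hεdef
  have hε : 0 < ε := by simp [hεdef]; linarith
  set M : ℝ := |C * A - c * h x₀| with hM
  have hev2 : ∀ᶠ x in atTop, ((G x : ℝ) : EReal) ≤ (d : EReal) := by
    filter_upwards [eventually_ge_atTop x₀, hhT.eventually_ge_atTop (max 1 (M / ε))] with x hx hhx
    have hhx1 : (1:ℝ) ≤ h x := le_trans (le_max_left _ _) hhx
    have hhxpos : 0 < h x := lt_of_lt_of_le one_pos hhx1
    have h1 := hbound x hx hhxpos
    have h2 : (C * A - c * h x₀) / h x ≤ M / h x :=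
      div_le_div_of_nonneg_right (le_abs_self _) hhxpos.le
    have h3 : M / h x ≤ ε := by
      rw [div_le_iff₀ hhxpos]
      have := (div_le_iff₀ hε).mp (le_trans (le_max_right _ _) hhx)
      linarith
    rw [EReal.coe_le_coe_iff]
    calc G x ≤ c + (C * A - c * h x₀) / h x := h1
      _ ≤ c + M / h x := by linarith
      _ ≤ c + ε := by linarith
      _ = d := by simp [hεdef]
  exact limsup_le_of_le (by isBoundedDefault) hev2

theorem stmt_5
    (b σ r : ℝ → ℝ) (r₀ r₁ : ℝ)
    (hbc : ContinuousOn b (Ioi 0))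
    (hσc : ContinuousOn σ (Ioi 0))
    (hrc : ContinuousOn r (Ioi 0))
    (hσpos : ∀ x ∈ Ioi (0:ℝ), 0 < σ x)
    (hr₀ : 0 < r₀) (hr₀₁ : r₀ ≤ r₁)
    (hrbd : ∀ x ∈ Ioi (0:ℝ), r₀ ≤ r x ∧ r x ≤ r₁)
    (p' : ℝ → ℝ)
    (hp' : ∀ x ∈ Ioi (0:ℝ), p' x = Real.exp (-(2:ℝ) * ∫ s in (1:ℝ)..x, b s / (σ s) ^ 2))
    (φ ψ φ' ψ' φ'' ψ'' : ℝ → ℝ)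
    (hφ1 : ∀ x ∈ Ioi (0:ℝ), HasDerivAt φ (φ' x) x)
    (hφ2 : ∀ x ∈ Ioi (0:ℝ), HasDerivAt φ' (φ'' x) x)
    (hφ2c : ContinuousOn φ'' (Ioi 0))
    (hψ1 : ∀ x ∈ Ioi (0:ℝ), HasDerivAt ψ (ψ' x) x)
    (hψ2 : ∀ x ∈ Ioi (0:ℝ), HasDerivAt ψ' (ψ'' x) x)
    (hψ2c : ContinuousOn ψ'' (Ioi 0))
    (hφpos : ∀ x ∈ Ioi (0:ℝ), 0 < φ x)
    (hφ'neg : ∀ x ∈ Ioi (0:ℝ), φ' x < 0)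
    (hψpos : ∀ x ∈ Ioi (0:ℝ), 0 < ψ x)
    (hψ'pos : ∀ x ∈ Ioi (0:ℝ), 0 < ψ' x)
    (hφODE : ∀ x ∈ Ioi (0:ℝ), (1/2) * σ x ^ 2 * φ'' x + b x * φ' x - r x * φ x = 0)
    (hψODE : ∀ x ∈ Ioi (0:ℝ), (1/2) * σ x ^ 2 * ψ'' x + b x * ψ' x - r x * ψ x = 0)
    (C : ℝ) (hC : 0 < C)
    (hWr : ∀ x ∈ Ioi (0:ℝ), φ x * ψ' x - φ' x * ψ x = C * p' x)
    (Ψ Φ : ℝ → ℝ)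
    (hΨ : ∀ x ∈ Ioi (0:ℝ), Ψ x = 2 * ψ x / (C * σ x ^ 2 * p' x))
    (hΦ : ∀ x ∈ Ioi (0:ℝ), Φ x = 2 * φ x / (C * σ x ^ 2 * p' x))
    (hψ'p'0 : Tendsto (fun x => ψ' x / p' x) (𝓝[>] (0:ℝ)) (𝓝 0))
    (hψ'p'T : Tendsto (fun x => ψ' x / p' x) atTop atTop)
    (F : ℝ → ℝ) (hFm : Measurable F)
    (hFIC : ∀ x ∈ Ioi (0:ℝ),
      IntegrableOn (fun s => F s * Ψ s) (Ioc 0 x) ∧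
      IntegrableOn (fun s => F s * Φ s) (Ioi x))
    (G : ℝ → ℝ)
    (hGdef : ∀ x ∈ Ioi (0:ℝ), G x = C * p' x / ψ' x * ∫ s in Ioc (0:ℝ) x, F s * Ψ s)
    :
    liminf (fun x => ((F x / r x : ℝ) : EReal)) atTop ≤
      liminf (fun x => ((G x : ℝ) : EReal)) atTop ∧
    liminf (fun x => ((G x : ℝ) : EReal)) atTop ≤
      limsup (fun x => ((G x : ℝ) : EReal)) atTop ∧
    limsup (fun x => ((G x : ℝ) : EReal)) atTop ≤
      limsup (fun x => ((F x / r x : ℝ) : EReal)) atTop := by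
  -- continuity of the integrand of the scale density
  have hq : ContinuousOn (fun s => b s / σ s ^ 2) (Ioi 0) :=
    hbc.div (hσc.pow 2) (fun x hx => pow_ne_zero 2 (hσpos x hx).ne')
  have hp'pos : ∀ x ∈ Ioi (0:ℝ), 0 < p' x := by
    intro x hx
    rw [hp' x hx]
    exact Real.exp_pos _
  have hIdiff : ∀ x ∈ Ioi (0:ℝ),
      HasDerivAt (fun y => ∫ s in (1:ℝ)..y, b s / σ s ^ 2) (b x / σ x ^ 2) x := by
    intro x hx
    apply intervalIntegral.integral_hasDerivAt_right
    · apply ContinuousOn.intervalIntegrable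
      apply hq.mono
      intro t ht
      rcases Set.mem_uIcc.mp ht with h1 | h1
      · exact lt_of_lt_of_le one_pos h1.1
      · exact lt_of_lt_of_le hx h1.1
    · exact (hq.stronglyMeasurableAtFilter isOpen_Ioi) x hx
    · exact hq.continuousAt (isOpen_Ioi.mem_nhds hx)
  have hp'deriv : ∀ x ∈ Ioi (0:ℝ), HasDerivAt p' (p' x * (-2 * (b x / σ x ^ 2))) x := by
    intro x hx
    have h1 := (((hIdiff x hx).const_mul (-(2:ℝ))).exp :)
    have heq : (fun y => Real.exp (-(2:ℝ) * ∫ s in (1:ℝ)..y, b s / σ s ^ 2)) =ᶠ[𝓝 x] p' := by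
      filter_upwards [isOpen_Ioi.mem_nhds hx] with y hy
      exact (hp' y hy).symm
    have h2 := h1.congr_of_eventuallyEq heq.symm
    rw [hp' x hx]
    convert h2 using 1
  have hψc : ContinuousOn ψ (Ioi 0) :=
    fun x hx => ((hψ1 x hx).continuousAt).continuousWithinAt
  have hp'c : ContinuousOn p' (Ioi 0) :=
    fun x hx => ((hp'deriv x hx).continuousAt).continuousWithinAt
  have hΨpos : ∀ x ∈ Ioi (0:ℝ), 0 < Ψ x := by
    intro x hx
    rw [hΨ x hx]
    exact div_pos (mul_pos two_pos (hψpos x hx))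
      (mul_pos (mul_pos hC (pow_pos (hσpos x hx) 2)) (hp'pos x hx))
  have hΨc : ContinuousOn Ψ (Ioi 0) := by
    have h1 : ContinuousOn (fun x => 2 * ψ x / (C * σ x ^ 2 * p' x)) (Ioi 0) :=
      (continuousOn_const.mul hψc).div ((continuousOn_const.mul (hσc.pow 2)).mul hp'c)
        (fun x hx => ne_of_gt (mul_pos (mul_pos hC (pow_pos (hσpos x hx) 2)) (hp'pos x hx)))
    exact h1.congr (fun x hx => hΨ x hx)
  have hhderiv : ∀ x ∈ Ioi (0:ℝ), HasDerivAt (fun y => ψ' y / p' y) (C * r x * Ψ x) x := by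
    intro x hx
    have hd := (hψ2 x hx).div (hp'deriv x hx) (hp'pos x hx).ne'
    refine hd.congr_deriv ?_
    have hσ : σ x ≠ 0 := (hσpos x hx).ne'
    have hp : p' x ≠ 0 := (hp'pos x hx).ne'
    have hCne : C ≠ 0 := hC.ne'
    have hψ'' : ψ'' x = (2 * (r x * ψ x - b x * ψ' x)) / σ x ^ 2 := by
      have h0 := hψODE x hx
      field_simp
      linarith
    rw [hΨ x hx, hψ'']
    field_simp
    ring
  have hrlb : ∀ x ∈ Ioi (0:ℝ), r₀ ≤ r x := fun x hx => (hrbd x hx).1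
  have hG1 : ∀ x ∈ Ioi (0:ℝ),
      G x = (1 / (ψ' x / p' x)) * (C * ∫ s in Ioc (0:ℝ) x, F s * Ψ s) := by
    intro x hx
    rw [hGdef x hx, one_div_div]
    ring
  have hFint : ∀ x ∈ Ioi (0:ℝ), IntegrableOn (fun s => F s * Ψ s) (Ioc 0 x) :=
    fun x hx => (hFIC x hx).1
  -- third inequality
  have h3 := key_limsup r r₀ hr₀ hrlb hrc Ψ hΨpos hΨc (fun y => ψ' y / p' y) C hC
    hhderiv hψ'p'T F hFint G hG1
  -- first inequality via negation
  have hFint' : ∀ x ∈ Ioi (0:ℝ), IntegrableOn (fun s => (-F s) * Ψ s) (Ioc 0 x) := by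
    intro x hx
    have heq : (fun s => (-F s) * Ψ s) = fun s => -(F s * Ψ s) := by funext s; ring
    rw [heq]
    exact (hFint x hx).neg
  have hG1' : ∀ x ∈ Ioi (0:ℝ),
      (fun y => -G y) x = (1 / (ψ' x / p' x)) * (C * ∫ s in Ioc (0:ℝ) x, (-F s) * Ψ s) := by
    intro x hx
    have heq : ∫ s in Ioc (0:ℝ) x, (-F s) * Ψ s = -∫ s in Ioc (0:ℝ) x, F s * Ψ s := by
      rw [← integral_neg]
      congr 1
      funext s
      ring
    simp only [heq]
    rw [hG1 x hx]
    ring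
  have h1 := key_limsup r r₀ hr₀ hrlb hrc Ψ hΨpos hΨc (fun y => ψ' y / p' y) C hC
    hhderiv hψ'p'T (fun y => -F y) hFint' (fun y => -G y) hG1'
  have hGneg : (fun x => (((-G x : ℝ)) : EReal)) = -(fun x => ((G x : ℝ) : EReal)) := by
    funext x
    simp [EReal.coe_neg]
  have hFneg : (fun x => (((-F x) / r x : ℝ) : EReal)) = -(fun x => ((F x / r x : ℝ) : EReal)) := by
    funext x
    simp [neg_div, EReal.coe_neg]
  rw [hGneg, hFneg, EReal.limsup_neg, EReal.limsup_neg, EReal.neg_le_neg_iff] at h1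
  refine ⟨h1, ?_, h3⟩
  exact liminf_le_limsup
end

section
/- Let F : (0,∞) → ℝ be a continuous function satisfying condition (IC). (a) If lim_{x↓0} φ(x) = ∞ and lim_{x↓0} R_F(x)/φ(x) = 0, then liminf_{x↓0} R_F'(x)/φ'(x) ≤ 0 ≤ limsup_{x↓0} R_F'(x)/φ'(x). (b) If lim_{x↑∞} ψ(x) = ∞ and lim_{x↑∞} R_F(x)/ψ(x) = 0, then liminf_{x↑∞} R_F'(x)/ψ'(x) ≤ 0 ≤ limsup_{x↑∞} R_F'(x)/ψ'(x). -/
open Filter Set MeasureTheory Topology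

private lemma keyA {l : Filter ℝ} [l.NeBot] {w R : ℝ → ℝ} {c K : ℝ} (hc : 0 < c)
    (hw : Tendsto w l atTop) (hRw : Tendsto (fun a => R a / w a) l (𝓝 0))
    (hev : ∀ᶠ a in l, K + c * w a ≤ R a) : False := by
  have h1 : ∀ᶠ a in l, 0 < w a := hw.eventually_gt_atTop 0
  have h2 : ∀ᶠ a in l, K / w a + c ≤ R a / w a := by
    filter_upwards [hev, h1] with a ha hpos
    have e : (K + c * w a) / w a = K / w a + c := by field_simp
    calc K / w a + c = (K + c * w a) / w a := e.symm
      _ ≤ R a / w a := div_le_div_of_nonneg_right ha hpos.le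
  have h3 : Tendsto (fun a => K / w a + c) l (𝓝 (0 + c)) :=
    (Tendsto.div_atTop tendsto_const_nhds hw).add_const c
  rw [zero_add] at h3
  have hc0 : c ≤ 0 := le_of_tendsto_of_tendsto h3 hRw h2
  linarith

private lemma ftc0 {f f' : ℝ → ℝ} (hd : ∀ t ∈ Ioi (0:ℝ), HasDerivAt f (f' t) t)
    (hc : ContinuousOn f' (Ioi 0)) {a x : ℝ} (ha : 0 < a) (hax : a ≤ x) :
    ∫ s in a..x, f' s = f x - f a := by
  have hsub : uIcc a x ⊆ Ioi (0:ℝ) := by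
    rw [uIcc_of_le hax]; exact fun t ht => lt_of_lt_of_le ha ht.1
  exact intervalIntegral.integral_eq_sub_of_hasDerivAt (fun t ht => hd t (hsub ht))
    ((hc.mono hsub).intervalIntegrable)

private lemma prim0 {f : ℝ → ℝ} (hf : ContinuousOn f (Ioi 0)) {x : ℝ} (hx : 0 < x) :
    HasDerivAt (fun u => ∫ s in (1:ℝ)..u, f s) (f x) x := by
  have hsub : uIcc 1 x ⊆ Ioi (0:ℝ) := by
    intro t ht
    have : min 1 x ≤ t := ht.1
    have h0 : (0:ℝ) < min 1 x := lt_min one_pos hx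
    exact lt_of_lt_of_le h0 ht.1
  exact intervalIntegral.integral_hasDerivAt_right ((hf.mono hsub).intervalIntegrable)
    (hf.stronglyMeasurableAtFilter isOpen_Ioi x hx)
    (hf.continuousAt (isOpen_Ioi.mem_nhds hx))

private lemma primAt {f : ℝ → ℝ} (hf : ContinuousOn f (Ioi 0)) {a x : ℝ} (ha : 0 < a)
    (hax : a < x) (hi : IntegrableOn f (Ioc a x)) :
    HasDerivAt (fun u => ∫ s in a..u, f s) (f x) x :=
  intervalIntegral.integral_hasDerivAt_right
    ((intervalIntegrable_iff_integrableOn_Ioc_of_le hax.le).mpr hi)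
    (hf.stronglyMeasurableAtFilter isOpen_Ioi x (ha.trans hax))
    (hf.continuousAt (isOpen_Ioi.mem_nhds (ha.trans hax)))

theorem stmt_6
    (b σ r : ℝ → ℝ) (r₀ r₁ : ℝ)
    (hbc : ContinuousOn b (Ioi 0))
    (hσc : ContinuousOn σ (Ioi 0))
    (hrc : ContinuousOn r (Ioi 0))
    (hσpos : ∀ x ∈ Ioi (0:ℝ), 0 < σ x)
    (hr₀ : 0 < r₀) (hr₀₁ : r₀ ≤ r₁)
    (hrbd : ∀ x ∈ Ioi (0:ℝ), r₀ ≤ r x ∧ r x ≤ r₁)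
    (p' : ℝ → ℝ)
    (hp' : ∀ x ∈ Ioi (0:ℝ), p' x = Real.exp (-(2:ℝ) * ∫ s in (1:ℝ)..x, b s / (σ s) ^ 2))
    (φ ψ φ' ψ' φ'' ψ'' : ℝ → ℝ)
    (hφ1 : ∀ x ∈ Ioi (0:ℝ), HasDerivAt φ (φ' x) x)
    (hφ2 : ∀ x ∈ Ioi (0:ℝ), HasDerivAt φ' (φ'' x) x)
    (hφ2c : ContinuousOn φ'' (Ioi 0))
    (hψ1 : ∀ x ∈ Ioi (0:ℝ), HasDerivAt ψ (ψ' x) x)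
    (hψ2 : ∀ x ∈ Ioi (0:ℝ), HasDerivAt ψ' (ψ'' x) x)
    (hψ2c : ContinuousOn ψ'' (Ioi 0))
    (hφpos : ∀ x ∈ Ioi (0:ℝ), 0 < φ x)
    (hφ'neg : ∀ x ∈ Ioi (0:ℝ), φ' x < 0)
    (hψpos : ∀ x ∈ Ioi (0:ℝ), 0 < ψ x)
    (hψ'pos : ∀ x ∈ Ioi (0:ℝ), 0 < ψ' x)
    (hφODE : ∀ x ∈ Ioi (0:ℝ), (1/2) * σ x ^ 2 * φ'' x + b x * φ' x - r x * φ x = 0)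
    (hψODE : ∀ x ∈ Ioi (0:ℝ), (1/2) * σ x ^ 2 * ψ'' x + b x * ψ' x - r x * ψ x = 0)
    (C : ℝ) (hC : 0 < C)
    (hWr : ∀ x ∈ Ioi (0:ℝ), φ x * ψ' x - φ' x * ψ x = C * p' x)
    (Ψ Φ : ℝ → ℝ)
    (hΨ : ∀ x ∈ Ioi (0:ℝ), Ψ x = 2 * ψ x / (C * σ x ^ 2 * p' x))
    (hΦ : ∀ x ∈ Ioi (0:ℝ), Φ x = 2 * φ x / (C * σ x ^ 2 * p' x))
    (F : ℝ → ℝ) (hFc : ContinuousOn F (Ioi 0))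
    (hFIC : ∀ x ∈ Ioi (0:ℝ),
      IntegrableOn (fun s => F s * Ψ s) (Ioc 0 x) ∧
      IntegrableOn (fun s => F s * Φ s) (Ioi x))
    (R : ℝ → ℝ)
    (hRdef : ∀ x ∈ Ioi (0:ℝ),
      R x = φ x * (∫ s in Ioc (0:ℝ) x, F s * Ψ s) + ψ x * (∫ s in Ioi x, F s * Φ s))
    (R' : ℝ → ℝ)
    (hR'def : ∀ x ∈ Ioi (0:ℝ),
      R' x = φ' x * (∫ s in Ioc (0:ℝ) x, F s * Ψ s) + ψ' x * (∫ s in Ioi x, F s * Φ s))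
    :
    (Tendsto φ (𝓝[>] (0:ℝ)) atTop → Tendsto (fun x => R x / φ x) (𝓝[>] (0:ℝ)) (𝓝 0) →
      liminf (fun x => ((R' x / φ' x : ℝ) : EReal)) (𝓝[>] (0:ℝ)) ≤ 0 ∧
      (0 : EReal) ≤ limsup (fun x => ((R' x / φ' x : ℝ) : EReal)) (𝓝[>] (0:ℝ))) ∧
    (Tendsto ψ atTop atTop → Tendsto (fun x => R x / ψ x) atTop (𝓝 0) →
      liminf (fun x => ((R' x / ψ' x : ℝ) : EReal)) atTop ≤ 0 ∧
      (0 : EReal) ≤ limsup (fun x => ((R' x / ψ' x : ℝ) : EReal)) atTop) := by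
  -- basic positivity and continuity facts
  have hp'pos : ∀ x ∈ Ioi (0:ℝ), 0 < p' x := fun x hx => by
    rw [hp' x hx]; exact Real.exp_pos _
  have hσne : ∀ x ∈ Ioi (0:ℝ), σ x ^ 2 ≠ 0 := fun x hx => pow_ne_zero 2 (hσpos x hx).ne'
  have hDne : ∀ x ∈ Ioi (0:ℝ), C * σ x ^ 2 * p' x ≠ 0 := fun x hx => by
    have h1 := hσpos x hx; have h2 := hp'pos x hx; positivity
  have hbσc : ContinuousOn (fun s => b s / σ s ^ 2) (Ioi 0) := hbc.div (hσc.pow 2) hσne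
  have hp'c : ContinuousOn p' (Ioi 0) := by
    have h1 : ContinuousOn (fun x : ℝ => Real.exp (-(2:ℝ) * ∫ s in (1:ℝ)..x, b s / σ s ^ 2))
        (Ioi 0) := Real.continuous_exp.comp_continuousOn (continuousOn_const.mul
          (fun x hx => (prim0 hbσc hx).continuousAt.continuousWithinAt))
    exact h1.congr hp'
  have hφc : ContinuousOn φ (Ioi 0) := fun x hx => (hφ1 x hx).continuousAt.continuousWithinAt
  have hψc : ContinuousOn ψ (Ioi 0) := fun x hx => (hψ1 x hx).continuousAt.continuousWithinAt
  have hφ'c : ContinuousOn φ' (Ioi 0) := fun x hx => (hφ2 x hx).continuousAt.continuousWithinAt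
  have hψ'c : ContinuousOn ψ' (Ioi 0) := fun x hx => (hψ2 x hx).continuousAt.continuousWithinAt
  have hΨc : ContinuousOn Ψ (Ioi 0) := by
    have h1 : ContinuousOn (fun x => 2 * ψ x / (C * σ x ^ 2 * p' x)) (Ioi 0) :=
      (continuousOn_const.mul hψc).div ((continuousOn_const.mul (hσc.pow 2)).mul hp'c) hDne
    exact h1.congr hΨ
  have hΦc : ContinuousOn Φ (Ioi 0) := by
    have h1 : ContinuousOn (fun x => 2 * φ x / (C * σ x ^ 2 * p' x)) (Ioi 0) :=
      (continuousOn_const.mul hφc).div ((continuousOn_const.mul (hσc.pow 2)).mul hp'c) hDne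
    exact h1.congr hΦ
  have hFΨc : ContinuousOn (fun s => F s * Ψ s) (Ioi 0) := hFc.mul hΨc
  have hFΦc : ContinuousOn (fun s => F s * Φ s) (Ioi 0) := hFc.mul hΦc
  -- derivative of the first integral term
  have hG : ∀ x ∈ Ioi (0:ℝ), HasDerivAt (fun u => ∫ s in Ioc (0:ℝ) u, F s * Ψ s)
      (F x * Ψ x) x := by
    intro x hx
    have hx0 : (0:ℝ) < x := hx
    have ha : (0:ℝ) < x / 2 := by linarith
    have hax : x / 2 < x := by linarith
    have hint : IntegrableOn (fun s => F s * Ψ s) (Ioc (x/2) x) :=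
      ((hFIC x hx).1).mono_set (Ioc_subset_Ioc_left ha.le)
    have hder := (primAt hFΨc ha hax hint).const_add (∫ s in Ioc (0:ℝ) (x/2), F s * Ψ s)
    apply hder.congr_of_eventuallyEq
    filter_upwards [isOpen_Ioi.mem_nhds (show x ∈ Ioi (x/2) from hax)] with u hu
    have hu2 : (x/2 : ℝ) < u := hu
    have hu0 : (0:ℝ) < u := ha.trans hu2
    have hdisj : Disjoint (Ioc (0:ℝ) (x/2)) (Ioc (x/2) u) := by
      rw [Set.disjoint_left]
      rintro s ⟨_, h1⟩ ⟨h2, _⟩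
      exact absurd h2 (not_lt.mpr h1)
    have hsplit : Ioc (0:ℝ) u = Ioc 0 (x/2) ∪ Ioc (x/2) u :=
      (Ioc_union_Ioc_eq_Ioc ha.le hu2.le).symm
    rw [hsplit, setIntegral_union hdisj measurableSet_Ioc (hFIC (x/2) ha).1
      (((hFIC u hu0).1).mono_set (Ioc_subset_Ioc_left ha.le)),
      intervalIntegral.integral_of_le hu2.le]
  -- derivative of the second integral term
  have hH : ∀ x ∈ Ioi (0:ℝ), HasDerivAt (fun u => ∫ s in Ioi u, F s * Φ s)
      (-(F x * Φ x)) x := by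
    intro x hx
    have hx0 : (0:ℝ) < x := hx
    have ha : (0:ℝ) < x / 2 := by linarith
    have hax : x / 2 < x := by linarith
    have hint : IntegrableOn (fun s => F s * Φ s) (Ioc (x/2) x) :=
      ((hFIC (x/2) ha).2).mono_set Ioc_subset_Ioi_self
    have hder := (primAt hFΦc ha hax hint).const_sub (∫ s in Ioi (x/2), F s * Φ s)
    apply hder.congr_of_eventuallyEq
    filter_upwards [isOpen_Ioi.mem_nhds (show x ∈ Ioi (x/2) from hax)] with u hu
    have hu2 : (x/2 : ℝ) < u := hu
    have hdisj : Disjoint (Ioc (x/2) u) (Ioi u) := by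
      rw [Set.disjoint_left]
      rintro s ⟨_, h1⟩ h2
      exact absurd h2 (not_lt.mpr h1)
    have hsplit : Ioi (x/2 : ℝ) = Ioc (x/2) u ∪ Ioi u := (Ioc_union_Ioi_eq_Ioi hu2.le).symm
    have key : (∫ s in Ioi (x/2 : ℝ), F s * Φ s)
        = (∫ s in Ioc (x/2 : ℝ) u, F s * Φ s) + ∫ s in Ioi u, F s * Φ s := by
      rw [hsplit, setIntegral_union hdisj measurableSet_Ioi
        (((hFIC (x/2) ha).2).mono_set Ioc_subset_Ioi_self)
        (((hFIC (x/2) ha).2).mono_set (Ioi_subset_Ioi hu2.le))]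
    rw [intervalIntegral.integral_of_le hu2.le]
    linarith [key]
  -- R has derivative R'
  have hRder : ∀ x ∈ Ioi (0:ℝ), HasDerivAt R (R' x) x := by
    intro x hx
    have h := ((hφ1 x hx).mul (hG x hx)).add ((hψ1 x hx).mul (hH x hx))
    have h2 : HasDerivAt (fun u => φ u * (∫ s in Ioc (0:ℝ) u, F s * Ψ s)
        + ψ u * (∫ s in Ioi u, F s * Φ s)) (R' x) x := by
      refine h.congr_deriv ?_
      rw [hR'def x hx, hΨ x hx, hΦ x hx]
      ring
    apply h2.congr_of_eventuallyEq
    filter_upwards [isOpen_Ioi.mem_nhds hx] with u hu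
    exact hRdef u hu
  have hR'c : ContinuousOn R' (Ioi 0) := by
    have h1 : ContinuousOn (fun x => φ' x * (∫ s in Ioc (0:ℝ) x, F s * Ψ s)
        + ψ' x * (∫ s in Ioi x, F s * Φ s)) (Ioi 0) :=
      (hφ'c.mul (fun x hx => (hG x hx).continuousAt.continuousWithinAt)).add
        (hψ'c.mul (fun x hx => (hH x hx).continuousAt.continuousWithinAt))
    exact h1.congr hR'def
  -- comparison estimates via FTC
  have hcomp : ∀ (f f' : ℝ → ℝ), (∀ t ∈ Ioi (0:ℝ), HasDerivAt f (f' t) t) →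
      ContinuousOn f' (Ioi 0) → ∀ (c a x : ℝ), 0 < a → a ≤ x →
      (∀ t ∈ Icc a x, R' t ≤ c * f' t) → R x - R a ≤ c * (f x - f a) := by
    intro f f' hd hc c a x ha hax hle
    have hsub : uIcc a x ⊆ Ioi (0:ℝ) := by
      rw [uIcc_of_le hax]; exact fun t ht => lt_of_lt_of_le ha ht.1
    have h1 : IntervalIntegrable R' volume a x := (hR'c.mono hsub).intervalIntegrable
    have h2 : IntervalIntegrable (fun t => c * f' t) volume a x :=
      ((hc.mono hsub).intervalIntegrable).const_mul c
    have hm := intervalIntegral.integral_mono_on hax h1 h2 hle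
    rw [ftc0 hRder hR'c ha hax, intervalIntegral.integral_const_mul,
      ftc0 hd hc ha hax] at hm
    exact hm
  have hcomp2 : ∀ (f f' : ℝ → ℝ), (∀ t ∈ Ioi (0:ℝ), HasDerivAt f (f' t) t) →
      ContinuousOn f' (Ioi 0) → ∀ (c a x : ℝ), 0 < a → a ≤ x →
      (∀ t ∈ Icc a x, c * f' t ≤ R' t) → c * (f x - f a) ≤ R x - R a := by
    intro f f' hd hc c a x ha hax hle
    have hsub : uIcc a x ⊆ Ioi (0:ℝ) := by
      rw [uIcc_of_le hax]; exact fun t ht => lt_of_lt_of_le ha ht.1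
    have h1 : IntervalIntegrable R' volume a x := (hR'c.mono hsub).intervalIntegrable
    have h2 : IntervalIntegrable (fun t => c * f' t) volume a x :=
      ((hc.mono hsub).intervalIntegrable).const_mul c
    have hm := intervalIntegral.integral_mono_on hax h2 h1 hle
    rw [ftc0 hRder hR'c ha hax, intervalIntegral.integral_const_mul,
      ftc0 hd hc ha hax] at hm
    exact hm
  constructor
  · intro hφtop hRφ
    constructor
    · by_contra hlim
      have h0 : (0:EReal) < liminf (fun x => ((R' x / φ' x : ℝ) : EReal)) (𝓝[>] (0:ℝ)) :=
        not_le.mp hlim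
      obtain ⟨c, hc0, hcl⟩ := EReal.exists_between_coe_real h0
      have hc : (0:ℝ) < c := by exact_mod_cast hc0
      have hev : ∀ᶠ x in 𝓝[>] (0:ℝ), (c : EReal) < ((R' x / φ' x : ℝ) : EReal) :=
        eventually_lt_of_lt_liminf hcl
      have hev2 : ∀ᶠ x in 𝓝[>] (0:ℝ), R' x ≤ c * φ' x := by
        filter_upwards [hev, self_mem_nhdsWithin] with x h1 hx
        have h1' : c < R' x / φ' x := by exact_mod_cast h1
        have := (lt_div_iff_of_neg (hφ'neg x hx)).mp h1'
        linarith
      rw [Filter.eventually_iff] at hev2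
      obtain ⟨u, hu, hsub⟩ := mem_nhdsGT_iff_exists_Ioo_subset.mp hev2
      have hu0 : (0:ℝ) < u := hu
      have hx0 : (0:ℝ) < u / 2 := by linarith
      have hxu : u / 2 < u := by linarith
      have hkey : ∀ a ∈ Ioo (0:ℝ) (u/2), (R (u/2) - c * φ (u/2)) + c * φ a ≤ R a := by
        rintro a ⟨ha0, hax⟩
        have h := hcomp φ φ' hφ1 hφ'c c a (u/2) ha0 hax.le (fun t ht =>
          hsub ⟨lt_of_lt_of_le ha0 ht.1, lt_of_le_of_lt ht.2 hxu⟩)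
        linarith
      exact keyA hc hφtop hRφ (by
        filter_upwards [Ioo_mem_nhdsGT_of_mem (show (0:ℝ) ∈ Ico (0:ℝ) (u/2) from ⟨le_refl _, hx0⟩)]
          with a ha
        exact hkey a ha)
    · by_contra hlim
      have h0 : limsup (fun x => ((R' x / φ' x : ℝ) : EReal)) (𝓝[>] (0:ℝ)) < 0 :=
        not_le.mp hlim
      obtain ⟨c', hcl, hc0⟩ := EReal.exists_between_coe_real h0
      have hc : c' < 0 := by exact_mod_cast hc0
      have hev : ∀ᶠ x in 𝓝[>] (0:ℝ), ((R' x / φ' x : ℝ) : EReal) < (c' : EReal) :=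
        eventually_lt_of_limsup_lt hcl
      have hev2 : ∀ᶠ x in 𝓝[>] (0:ℝ), c' * φ' x ≤ R' x := by
        filter_upwards [hev, self_mem_nhdsWithin] with x h1 hx
        have h1' : R' x / φ' x < c' := by exact_mod_cast h1
        have := (div_lt_iff_of_neg (hφ'neg x hx)).mp h1'
        linarith
      rw [Filter.eventually_iff] at hev2
      obtain ⟨u, hu, hsub⟩ := mem_nhdsGT_iff_exists_Ioo_subset.mp hev2
      have hu0 : (0:ℝ) < u := hu
      have hx0 : (0:ℝ) < u / 2 := by linarith
      have hxu : u / 2 < u := by linarith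
      have hRφ' : Tendsto (fun a => (-R a) / φ a) (𝓝[>] (0:ℝ)) (𝓝 0) := by
        have := hRφ.neg
        simpa [neg_div] using this
      have hkey : ∀ a ∈ Ioo (0:ℝ) (u/2),
          (-(R (u/2)) + c' * φ (u/2)) + (-c') * φ a ≤ -R a := by
        rintro a ⟨ha0, hax⟩
        have h := hcomp2 φ φ' hφ1 hφ'c c' a (u/2) ha0 hax.le (fun t ht =>
          hsub ⟨lt_of_lt_of_le ha0 ht.1, lt_of_le_of_lt ht.2 hxu⟩)
        linarith
      exact keyA (show (0:ℝ) < -c' by linarith) hφtop hRφ' (by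
        filter_upwards [Ioo_mem_nhdsGT_of_mem (show (0:ℝ) ∈ Ico (0:ℝ) (u/2) from ⟨le_refl _, hx0⟩)]
          with a ha
        exact hkey a ha)
  · intro hψtop hRψ
    constructor
    · by_contra hlim
      have h0 : (0:EReal) < liminf (fun x => ((R' x / ψ' x : ℝ) : EReal)) atTop :=
        not_le.mp hlim
      obtain ⟨c, hc0, hcl⟩ := EReal.exists_between_coe_real h0
      have hc : (0:ℝ) < c := by exact_mod_cast hc0
      have hev : ∀ᶠ x in atTop, (c : EReal) < ((R' x / ψ' x : ℝ) : EReal) :=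
        eventually_lt_of_lt_liminf hcl
      have hev2 : ∀ᶠ x in atTop, c * ψ' x ≤ R' x := by
        filter_upwards [hev, eventually_gt_atTop (0:ℝ)] with x h1 hx
        have h1' : c < R' x / ψ' x := by exact_mod_cast h1
        have := (lt_div_iff₀ (hψ'pos x hx)).mp h1'
        linarith
      obtain ⟨M, hM⟩ := (hev2.and (eventually_gt_atTop (0:ℝ))).exists_forall_of_atTop
      have ha0 : (0:ℝ) < max M 1 := lt_of_lt_of_le one_pos (le_max_right _ _)
      have hkey : ∀ x, max M 1 ≤ x →
          (R (max M 1) - c * ψ (max M 1)) + c * ψ x ≤ R x := by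
        intro x hx
        have h := hcomp2 ψ ψ' hψ1 hψ'c c (max M 1) x ha0 hx (fun t ht =>
          (hM t (le_trans (le_max_left _ _) ht.1)).1)
        linarith
      exact keyA hc hψtop hRψ (by
        filter_upwards [eventually_ge_atTop (max M 1)] with x hx
        exact hkey x hx)
    · by_contra hlim
      have h0 : limsup (fun x => ((R' x / ψ' x : ℝ) : EReal)) atTop < 0 := not_le.mp hlim
      obtain ⟨c', hcl, hc0⟩ := EReal.exists_between_coe_real h0
      have hc : c' < 0 := by exact_mod_cast hc0
      have hev : ∀ᶠ x in atTop, ((R' x / ψ' x : ℝ) : EReal) < (c' : EReal) :=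
        eventually_lt_of_limsup_lt hcl
      have hev2 : ∀ᶠ x in atTop, R' x ≤ c' * ψ' x := by
        filter_upwards [hev, eventually_gt_atTop (0:ℝ)] with x h1 hx
        have h1' : R' x / ψ' x < c' := by exact_mod_cast h1
        have := (div_lt_iff₀ (hψ'pos x hx)).mp h1'
        linarith
      obtain ⟨M, hM⟩ := (hev2.and (eventually_gt_atTop (0:ℝ))).exists_forall_of_atTop
      have ha0 : (0:ℝ) < max M 1 := lt_of_lt_of_le one_pos (le_max_right _ _)
      have hRψ' : Tendsto (fun a => (-R a) / ψ a) atTop (𝓝 0) := by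
        have := hRψ.neg
        simpa [neg_div] using this
      have hkey : ∀ x, max M 1 ≤ x →
          (-(R (max M 1)) + c' * ψ (max M 1)) + (-c') * ψ x ≤ -R x := by
        intro x hx
        have h := hcomp ψ ψ' hψ1 hψ'c c' (max M 1) x ha0 hx (fun t ht =>
          (hM t (le_trans (le_max_left _ _) ht.1)).1)
        linarith
      exact keyA (show (0:ℝ) < -c' by linarith) hψtop hRψ' (by
        filter_upwards [eventually_ge_atTop (max M 1)] with x hx
        exact hkey x hx)
end

section
/- Let F : (0,∞) → ℝ be a continuous function satisfying condition (IC). Assume lim_{x↓0} ψ'(x)/p'(x) = 0, lim_{x↑∞} ψ(x) = ∞, and lim_{x↑∞} R_F(x)/ψ(x) = 0. If there exists x† > 0 such that the restriction of F/r to [x†,∞) is monotone, then lim_{x↑∞} R_F'(x)/ψ'(x) = 0. -/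
open Filter Set MeasureTheory Topology

set_option maxHeartbeats 1000000 in
lemma core_lemma (x₁ C : ℝ) (hC : 0 < C)
    (A B R g u v φ ψ : ℝ → ℝ)
    (hψpos : ∀ x, x₁ ≤ x → 0 < ψ x)
    (hφpos : ∀ x, x₁ ≤ x → 0 < φ x)
    (hupos : ∀ x, x₁ ≤ x → 0 < u x)
    (hvpos : ∀ x, x₁ ≤ x → 0 ≤ v x)
    (humono : ∀ x, x₁ ≤ x → u x₁ ≤ u x)
    (hWr : ∀ x, x₁ ≤ x → φ x * u x + v x * ψ x = C)
    (hAub : ∀ x, x₁ ≤ x → C * A x ≤ C * A x₁ + g x * (u x - u x₁))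
    (hAlb : ∀ x, x₁ ≤ x → C * A x₁ + g x₁ * (u x - u x₁) ≤ C * A x)
    (hBlb : ∀ x, x₁ ≤ x → g x * v x ≤ C * B x)
    (hR : ∀ x, x₁ ≤ x → R x = φ x * A x + ψ x * B x)
    (hφbd : ∀ x, x₁ ≤ x → φ x ≤ φ x₁)
    (hRψ : Tendsto (fun x => R x / ψ x) atTop (𝓝 0))
    (hB0 : Tendsto B atTop (𝓝 0))
    (hψT : Tendsto ψ atTop atTop) :
    Tendsto (fun x => A x / (u x * ψ x)) atTop (𝓝 0) := by
  have hu₁ : 0 < u x₁ := hupos x₁ le_rfl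
  have hφ₁ : 0 < φ x₁ := hφpos x₁ le_rfl
  have hφAψ : Tendsto (fun x => φ x * A x / ψ x) atTop (𝓝 0) := by
    have h1 : Tendsto (fun x => R x / ψ x - B x) atTop (𝓝 0) := by
      simpa using hRψ.sub hB0
    apply h1.congr'
    filter_upwards [eventually_ge_atTop x₁] with x hx
    have hψx := hψpos x hx
    rw [hR x hx]
    field_simp
    ring
  rw [NormedAddCommGroup.tendsto_nhds_zero]
  intro ε hε
  set τ : ℝ := ε * C / 2 with hτdef
  have hτ : 0 < τ := by positivity
  set c₀ : ℝ := C * A x₁ - g x₁ * u x₁ with hc₀def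
  set K : ℝ := |c₀| + C * |A x₁| + |g x₁| + 1 with hKdef
  have hKpos : 0 < K := by positivity
  have hgK : |g x₁| ≤ K := by
    have := abs_nonneg c₀
    have := mul_nonneg hC.le (abs_nonneg (A x₁))
    simp only [hKdef]; linarith
  have hcK : |c₀| ≤ K := by
    have := mul_nonneg hC.le (abs_nonneg (A x₁))
    have := abs_nonneg (g x₁)
    simp only [hKdef]; linarith
  have hAK : C * |A x₁| ≤ K := by
    have := abs_nonneg c₀
    have := abs_nonneg (g x₁)
    simp only [hKdef]; linarith
  have hev1 : ∀ᶠ x in atTop, x₁ ≤ x := eventually_ge_atTop x₁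
  have hev2 : ∀ᶠ x in atTop, 4 * K * (1 + u x₁) ≤ ε * C * u x₁ * ψ x := by
    filter_upwards [hψT.eventually_ge_atTop (4 * K * (1 + u x₁) / (ε * C * u x₁))] with x hx
    rw [div_le_iff₀ (by positivity)] at hx
    linarith
  have hev3 : ∀ᶠ x in atTop, 2 * |g x₁| ≤ τ * ψ x := by
    filter_upwards [hψT.eventually_ge_atTop (2 * |g x₁| / τ)] with x hx
    rw [div_le_iff₀ hτ] at hx; linarith
  have hev4 : ∀ᶠ x in atTop, |R x / ψ x| ≤ τ / 8 := by
    have h := hRψ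
    rw [NormedAddCommGroup.tendsto_nhds_zero] at h
    filter_upwards [h (τ/8) (by positivity)] with x hx
    rw [Real.norm_eq_abs] at hx; linarith
  have hev5 : ∀ᶠ x in atTop, φ x₁ * |c₀| + C * |g x₁| ≤ ψ x * (τ * C / 8) := by
    filter_upwards [hψT.eventually_ge_atTop ((φ x₁ * |c₀| + C * |g x₁|) / (τ * C / 8))] with x hx
    rw [div_le_iff₀ (by positivity)] at hx; linarith
  have hev6 : ∀ᶠ x in atTop, |φ x * A x / ψ x| ≤ ε * C / 8 := by
    have h := hφAψ
    rw [NormedAddCommGroup.tendsto_nhds_zero] at h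
    filter_upwards [h (ε*C/8) (by positivity)] with x hx
    rw [Real.norm_eq_abs] at hx; linarith
  filter_upwards [hev1, hev2, hev3, hev4, hev5, hev6] with x hx1 hx2 hx3 hx4 hx5 hx6
  have hψx := hψpos x hx1
  have hφx := hφpos x hx1
  have hux := hupos x hx1
  have hvx := hvpos x hx1
  have hu1x := humono x hx1
  have hWx := hWr x hx1
  have hAu := hAub x hx1
  have hAl := hAlb x hx1
  have hBl := hBlb x hx1
  have hφb := hφbd x hx1
  have hP : 0 < u x * ψ x := mul_pos hux hψx
  rw [Real.norm_eq_abs]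
  have h4K : 4 * K * (1 + u x) ≤ ε * C * (u x * ψ x) := by
    have h0 : 4 * K * u x₁ ≤ 4 * K * u x :=
      mul_le_mul_of_nonneg_left hu1x (by positivity)
    have h1 : 4 * K * (1 + u x) * u x₁ ≤ 4 * K * (1 + u x₁) * u x := by
      nlinarith [mul_le_mul_of_nonneg_left hu1x (by positivity : (0:ℝ) ≤ 4 * K)]
    have h2 : 4 * K * (1 + u x₁) * u x ≤ ε * C * u x₁ * ψ x * u x :=
      mul_le_mul_of_nonneg_right hx2 hux.le
    have h3 : 4 * K * (1 + u x) * u x₁ ≤ ε * C * (u x * ψ x) * u x₁ := by linarith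
    exact le_of_mul_le_mul_right h3 hu₁
  have hKu := mul_pos hKpos hux
  rcases le_or_gt (g x) (τ * ψ x) with hgc | hgc
  · -- branch (i)
    rw [abs_lt]
    have hlow : -(K * (1 + u x)) ≤ C * A x := by
      have m1 : |g x₁| * u x ≤ K * u x := mul_le_mul_of_nonneg_right hgK hux.le
      have m2 : 0 ≤ (g x₁ + |g x₁|) * u x :=
        mul_nonneg (by linarith [neg_abs_le (g x₁)]) hux.le
      have hca : -|c₀| ≤ c₀ := neg_abs_le c₀
      have m3 : c₀ + g x₁ * u x ≤ C * A x := by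
        simp only [hc₀def]; linarith
      nlinarith [m1, m2, m3]
    constructor
    · rw [neg_lt, ← neg_div, div_lt_iff₀ hP]
      have h : -A x * C < ε * (u x * ψ x) * C := by linarith
      exact lt_of_mul_lt_mul_right h hC.le
    · rw [div_lt_iff₀ hP]
      have h3 : C * A x₁ ≤ C * |A x₁| :=
        mul_le_mul_of_nonneg_left (le_abs_self _) hC.le
      have hτψu : τ * ψ x * u x = ε * C * (u x * ψ x) / 2 := by
        rw [hτdef]; ring
      have hup : C * A x ≤ K + ε * C * (u x * ψ x) / 2 := by
        rcases lt_or_ge 0 (g x) with hg0 | hg0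
        · have h1 : g x * (u x - u x₁) ≤ τ * ψ x * (u x - u x₁) :=
            mul_le_mul_of_nonneg_right hgc (by linarith)
          have h2 : τ * ψ x * (u x - u x₁) ≤ τ * ψ x * u x :=
            mul_le_mul_of_nonneg_left (by linarith) (by positivity)
          linarith
        · have h1 : g x * (u x - u x₁) ≤ 0 :=
            mul_nonpos_of_nonpos_of_nonneg hg0 (by linarith)
          have h2 : 0 ≤ ε * C * (u x * ψ x) / 2 := by positivity
          linarith
      have h : A x * C < ε * (u x * ψ x) * C := by linarith
      exact lt_of_mul_lt_mul_right h hC.le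
  · -- branch (ii)
    have hAl2 : c₀ + g x₁ * u x ≤ C * A x := by simp only [hc₀def]; linarith
    have hBl2 : τ * ψ x * v x ≤ C * B x := by
      have h := mul_le_mul_of_nonneg_right hgc.le hvx
      linarith
    have e1 : φ x * (c₀ + g x₁ * u x) + ψ x * (τ * ψ x * v x) ≤ C * R x := by
      have t1 := mul_le_mul_of_nonneg_left hAl2 hφx.le
      have t2 := mul_le_mul_of_nonneg_left hBl2 hψx.le
      have t3 : C * R x = φ x * (C * A x) + ψ x * (C * B x) := by rw [hR x hx1]; ring
      linarith
    have hφu : φ x * u x = C - v x * ψ x := by linarith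
    have e3 : v x * ψ x * (τ * ψ x - g x₁) ≤ C * R x - φ x * c₀ - g x₁ * C := by
      have hsub : g x₁ * (φ x * u x) = g x₁ * (C - v x * ψ x) := by rw [hφu]
      nlinarith [e1, hsub]
    have h2 : R x / ψ x * ψ x ≤ |R x / ψ x| * ψ x :=
      mul_le_mul_of_nonneg_right (le_abs_self _) hψx.le
    have e0 : R x = R x / ψ x * ψ x := by field_simp
    have hRb : C * R x ≤ C * (|R x / ψ x| * ψ x) := by
      calc C * R x = C * (R x / ψ x * ψ x) := by rw [← e0]
        _ ≤ C * (|R x / ψ x| * ψ x) := mul_le_mul_of_nonneg_left h2 hC.le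
    have hc₀b : -(φ x * c₀) ≤ φ x₁ * |c₀| := by
      have t1 : φ x * -c₀ ≤ φ x * |c₀| :=
        mul_le_mul_of_nonneg_left (neg_le_abs c₀) hφx.le
      have t2 : φ x * |c₀| ≤ φ x₁ * |c₀| :=
        mul_le_mul_of_nonneg_right hφb (abs_nonneg c₀)
      linarith
    have hgb : -(g x₁ * C) ≤ C * |g x₁| := by
      have := mul_le_mul_of_nonneg_left (neg_le_abs (g x₁)) hC.le
      linarith
    have e4 : v x * ψ x * (τ * ψ x - g x₁) ≤ τ * C / 4 * ψ x := by
      have t1 : |R x / ψ x| * ψ x ≤ τ / 8 * ψ x :=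
        mul_le_mul_of_nonneg_right hx4 hψx.le
      have t2 : C * (|R x / ψ x| * ψ x) ≤ C * (τ / 8 * ψ x) :=
        mul_le_mul_of_nonneg_left t1 hC.le
      linarith
    have e5 : τ * ψ x / 2 ≤ τ * ψ x - g x₁ := by
      have := le_abs_self (g x₁); linarith
    have e6 : v x * ψ x ≤ C / 2 := by
      have hvψ : 0 ≤ v x * ψ x := mul_nonneg hvx hψx.le
      have t1 : v x * ψ x * (τ * ψ x / 2) ≤ v x * ψ x * (τ * ψ x - g x₁) :=
        mul_le_mul_of_nonneg_left e5 hvψ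
      nlinarith [mul_pos hτ hψx]
    have hφu2 : C / 2 ≤ φ x * u x := by linarith
    have heq : A x / (u x * ψ x) = (φ x * A x / ψ x) / (φ x * u x) := by
      field_simp
    rw [heq, abs_div, abs_of_pos (by linarith : (0:ℝ) < φ x * u x)]
    have hb : |φ x * A x / ψ x| / (φ x * u x) ≤ (ε * C / 8) / (C / 2) :=
      div_le_div₀ (by positivity) hx6 (by linarith) hφu2
    have hqe : (ε * C / 8) / (C / 2) = ε / 4 := by
      field_simp; ring
    rw [hqe] at hb
    linarith

set_option maxHeartbeats 1600000 in
theorem stmt_7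
    (b σ r : ℝ → ℝ) (r₀ r₁ : ℝ)
    (hbc : ContinuousOn b (Ioi 0))
    (hσc : ContinuousOn σ (Ioi 0))
    (hrc : ContinuousOn r (Ioi 0))
    (hσpos : ∀ x ∈ Ioi (0:ℝ), 0 < σ x)
    (hr₀ : 0 < r₀) (hr₀₁ : r₀ ≤ r₁)
    (hrbd : ∀ x ∈ Ioi (0:ℝ), r₀ ≤ r x ∧ r x ≤ r₁)
    (p' : ℝ → ℝ)
    (hp' : ∀ x ∈ Ioi (0:ℝ), p' x = Real.exp (-(2:ℝ) * ∫ s in (1:ℝ)..x, b s / (σ s) ^ 2))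
    (φ ψ φ' ψ' φ'' ψ'' : ℝ → ℝ)
    (hφ1 : ∀ x ∈ Ioi (0:ℝ), HasDerivAt φ (φ' x) x)
    (hφ2 : ∀ x ∈ Ioi (0:ℝ), HasDerivAt φ' (φ'' x) x)
    (hφ2c : ContinuousOn φ'' (Ioi 0))
    (hψ1 : ∀ x ∈ Ioi (0:ℝ), HasDerivAt ψ (ψ' x) x)
    (hψ2 : ∀ x ∈ Ioi (0:ℝ), HasDerivAt ψ' (ψ'' x) x)
    (hψ2c : ContinuousOn ψ'' (Ioi 0))
    (hφpos : ∀ x ∈ Ioi (0:ℝ), 0 < φ x)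
    (hφ'neg : ∀ x ∈ Ioi (0:ℝ), φ' x < 0)
    (hψpos : ∀ x ∈ Ioi (0:ℝ), 0 < ψ x)
    (hψ'pos : ∀ x ∈ Ioi (0:ℝ), 0 < ψ' x)
    (hφODE : ∀ x ∈ Ioi (0:ℝ), (1/2) * σ x ^ 2 * φ'' x + b x * φ' x - r x * φ x = 0)
    (hψODE : ∀ x ∈ Ioi (0:ℝ), (1/2) * σ x ^ 2 * ψ'' x + b x * ψ' x - r x * ψ x = 0)
    (C : ℝ) (hC : 0 < C)
    (hWr : ∀ x ∈ Ioi (0:ℝ), φ x * ψ' x - φ' x * ψ x = C * p' x)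
    (Ψ Φ : ℝ → ℝ)
    (hΨ : ∀ x ∈ Ioi (0:ℝ), Ψ x = 2 * ψ x / (C * σ x ^ 2 * p' x))
    (hΦ : ∀ x ∈ Ioi (0:ℝ), Φ x = 2 * φ x / (C * σ x ^ 2 * p' x))
    (F : ℝ → ℝ) (hFc : ContinuousOn F (Ioi 0))
    (hFIC : ∀ x ∈ Ioi (0:ℝ),
      IntegrableOn (fun s => F s * Ψ s) (Ioc 0 x) ∧
      IntegrableOn (fun s => F s * Φ s) (Ioi x))
    (R : ℝ → ℝ)
    (hRdef : ∀ x ∈ Ioi (0:ℝ),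
      R x = φ x * (∫ s in Ioc (0:ℝ) x, F s * Ψ s) + ψ x * (∫ s in Ioi x, F s * Φ s))
    (R' : ℝ → ℝ)
    (hR'def : ∀ x ∈ Ioi (0:ℝ),
      R' x = φ' x * (∫ s in Ioc (0:ℝ) x, F s * Ψ s) + ψ' x * (∫ s in Ioi x, F s * Φ s))
    (hψ'p'0 : Tendsto (fun x => ψ' x / p' x) (𝓝[>] (0:ℝ)) (𝓝 0))
    (hψT : Tendsto ψ atTop atTop)
    (hRψT : Tendsto (fun x => R x / ψ x) atTop (𝓝 0))
    (xd : ℝ) (hxd : 0 < xd)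
    (hmono : MonotoneOn (fun x => F x / r x) (Ici xd) ∨
             AntitoneOn (fun x => F x / r x) (Ici xd)) :
    Tendsto (fun x => R' x / ψ' x) atTop (𝓝 0) := by
  classical
  set x₁ : ℝ := xd with hx₁def
  have hx₁ : 0 < x₁ := hxd
  have hmem : ∀ {x : ℝ}, x₁ ≤ x → x ∈ Ioi (0:ℝ) := fun {x} hx => lt_of_lt_of_le hx₁ hx
  have hIop : IsOpen (Ioi (0:ℝ)) := isOpen_Ioi
  have hp'pos : ∀ x ∈ Ioi (0:ℝ), 0 < p' x := fun x hx => by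
    rw [hp' x hx]; exact Real.exp_pos _
  have hφcont : ContinuousOn φ (Ioi 0) := fun x hx => (hφ1 x hx).continuousAt.continuousWithinAt
  have hψcont : ContinuousOn ψ (Ioi 0) := fun x hx => (hψ1 x hx).continuousAt.continuousWithinAt
  have hφ'cont : ContinuousOn φ' (Ioi 0) := fun x hx => (hφ2 x hx).continuousAt.continuousWithinAt
  have hψ'cont : ContinuousOn ψ' (Ioi 0) := fun x hx => (hψ2 x hx).continuousAt.continuousWithinAt
  have hp'cont : ContinuousOn p' (Ioi 0) := by
    apply ContinuousOn.congr (f := fun x => (φ x * ψ' x - φ' x * ψ x) / C)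
    · exact ((hφcont.mul hψ'cont).sub (hφ'cont.mul hψcont)).div_const C
    · intro x hx
      have := hWr x hx
      field_simp [this]
      linarith
  have hσ2pos : ∀ x ∈ Ioi (0:ℝ), (0:ℝ) < σ x ^ 2 := fun x hx => pow_pos (hσpos x hx) 2
  have hden : ∀ x ∈ Ioi (0:ℝ), C * σ x ^ 2 * p' x ≠ 0 := fun x hx => by
    have := hσ2pos x hx; have := hp'pos x hx; positivity
  have hrpos : ∀ s ∈ Ioi (0:ℝ), 0 < r s := fun s hs => lt_of_lt_of_le hr₀ (hrbd s hs).1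
  have hΨpos : ∀ s ∈ Ioi (0:ℝ), 0 ≤ Ψ s := fun s hs => by
    rw [hΨ s hs]
    have := hψpos s hs; have := hσ2pos s hs; have := hp'pos s hs
    positivity
  have hΦpos : ∀ s ∈ Ioi (0:ℝ), 0 ≤ Φ s := fun s hs => by
    rw [hΦ s hs]
    have := hφpos s hs; have := hσ2pos s hs; have := hp'pos s hs
    positivity
  have hΨcont : ContinuousOn Ψ (Ioi 0) := by
    apply ContinuousOn.congr (f := fun x => 2 * ψ x / (C * σ x ^ 2 * p' x))
    · exact (continuousOn_const.mul hψcont).div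
        ((continuousOn_const.mul (hσc.pow 2)).mul hp'cont) hden
    · exact fun x hx => hΨ x hx
  have hΦcont : ContinuousOn Φ (Ioi 0) := by
    apply ContinuousOn.congr (f := fun x => 2 * φ x / (C * σ x ^ 2 * p' x))
    · exact (continuousOn_const.mul hφcont).div
        ((continuousOn_const.mul (hσc.pow 2)).mul hp'cont) hden
    · exact fun x hx => hΦ x hx
  have hrΨcont : ContinuousOn (fun s => r s * Ψ s) (Ioi 0) := hrc.mul hΨcont
  have hrΦcont : ContinuousOn (fun s => r s * Φ s) (Ioi 0) := hrc.mul hΦcont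
  -- u and v
  set u : ℝ → ℝ := fun x => ψ' x / p' x with hudef
  set v : ℝ → ℝ := fun x => -φ' x / p' x with hvdef
  have hupos : ∀ x ∈ Ioi (0:ℝ), 0 < u x := fun x hx =>
    div_pos (hψ'pos x hx) (hp'pos x hx)
  have hvpos : ∀ x ∈ Ioi (0:ℝ), 0 < v x := fun x hx =>
    div_pos (by linarith [hφ'neg x hx]) (hp'pos x hx)
  have hWr2 : ∀ x ∈ Ioi (0:ℝ), φ x * u x + v x * ψ x = C := by
    intro x hx
    have hW := hWr x hx
    have hp := (hp'pos x hx).ne'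
    simp only [hudef, hvdef]
    field_simp
    linarith
  -- derivative of p'
  have hbσcont : ContinuousOn (fun s => b s / σ s ^ 2) (Ioi 0) :=
    hbc.div (hσc.pow 2) (fun x hx => (hσ2pos x hx).ne')
  have hIder : ∀ x ∈ Ioi (0:ℝ),
      HasDerivAt (fun t => ∫ s in (1:ℝ)..t, b s / σ s ^ 2) (b x / σ x ^ 2) x := by
    intro x hx
    apply intervalIntegral.integral_hasDerivAt_right
    · apply ContinuousOn.intervalIntegrable
      apply hbσcont.mono
      intro t ht
      have h1 : min 1 x ≤ t := ht.1
      exact lt_of_lt_of_le (lt_min one_pos hx) h1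
    · exact hbσcont.stronglyMeasurableAtFilter hIop x hx
    · exact hbσcont.continuousAt (hIop.mem_nhds hx)
  have hp'der : ∀ x ∈ Ioi (0:ℝ),
      HasDerivAt p' (p' x * (-(2:ℝ) * (b x / σ x ^ 2))) x := by
    intro x hx
    have h1 := ((hIder x hx).const_mul (-(2:ℝ))).exp
    have heqv : (fun t => Real.exp (-(2:ℝ) * ∫ s in (1:ℝ)..t, b s / σ s ^ 2)) =ᶠ[𝓝 x] p' := by
      filter_upwards [hIop.mem_nhds hx] with y hy using (hp' y hy).symm
    have h2 := h1.congr_of_eventuallyEq heqv.symm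
    rw [← hp' x hx] at h2
    exact h2
  -- derivatives of u and v
  have huder : ∀ x ∈ Ioi (0:ℝ), HasDerivAt u (C * (r x * Ψ x)) x := by
    intro x hx
    have h := (hψ2 x hx).div (hp'der x hx) (hp'pos x hx).ne'
    refine h.congr_deriv ?_
    symm
    have hσx := (hσ2pos x hx).ne'
    have hpx := (hp'pos x hx).ne'
    have hODE := hψODE x hx
    have hσ1 := (hσpos x hx).ne'
    rw [hΨ x hx]
    field_simp
    linear_combination (-2) * hODE
  have hvder : ∀ x ∈ Ioi (0:ℝ), HasDerivAt v (-(C * (r x * Φ x))) x := by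
    intro x hx
    have h := ((hφ2 x hx).neg).div (hp'der x hx) (hp'pos x hx).ne'
    refine h.congr_deriv ?_
    symm
    have hσx := (hσ2pos x hx).ne'
    have hpx := (hp'pos x hx).ne'
    have hODE := hφODE x hx
    have hσ1 := (hσpos x hx).ne'
    rw [hΦ x hx]
    field_simp
    have hneg : (-φ') x = -φ' x := rfl
    linear_combination 2 * hODE - 2 * b x * hneg
  -- FTC identities
  have hufund : ∀ y x : ℝ, 0 < y → y ≤ x → u x - u y = C * ∫ s in Ioc y x, r s * Ψ s := by
    intro y x hy hyx
    have hsub : uIcc y x ⊆ Ioi 0 := by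
      rw [uIcc_of_le hyx]
      exact fun t ht => lt_of_lt_of_le hy ht.1
    have hint : IntervalIntegrable (fun s => C * (r s * Ψ s)) volume y x :=
      ((continuousOn_const.mul hrΨcont).mono hsub).intervalIntegrable
    have hftc := intervalIntegral.integral_eq_sub_of_hasDerivAt
      (f := u) (f' := fun s => C * (r s * Ψ s)) (fun t ht => huder t (hsub ht)) hint
    rw [intervalIntegral.integral_of_le hyx, MeasureTheory.integral_const_mul] at hftc
    linarith [hftc]
  have hvfund : ∀ y x : ℝ, 0 < y → y ≤ x → v y - v x = C * ∫ s in Ioc y x, r s * Φ s := by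
    intro y x hy hyx
    have hsub : uIcc y x ⊆ Ioi 0 := by
      rw [uIcc_of_le hyx]
      exact fun t ht => lt_of_lt_of_le hy ht.1
    have hint : IntervalIntegrable (fun s => -(C * (r s * Φ s))) volume y x :=
      (((continuousOn_const.mul hrΦcont).mono hsub).neg).intervalIntegrable
    have hftc := intervalIntegral.integral_eq_sub_of_hasDerivAt
      (f := v) (f' := fun s => -(C * (r s * Φ s))) (fun t ht => hvder t (hsub ht)) hint
    rw [intervalIntegral.integral_of_le hyx] at hftc
    rw [MeasureTheory.integral_neg, MeasureTheory.integral_const_mul] at hftc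
    linarith [hftc]
  have humono : ∀ x, x₁ ≤ x → u x₁ ≤ u x := by
    intro x hx
    have h := hufund x₁ x hx₁ hx
    have hnn : 0 ≤ ∫ s in Ioc x₁ x, r s * Ψ s := by
      apply setIntegral_nonneg measurableSet_Ioc
      intro s hs
      have hs0 : s ∈ Ioi (0:ℝ) := lt_trans hx₁ hs.1
      exact mul_nonneg (hrpos s hs0).le (hΨpos s hs0)
    nlinarith
  -- v tends to 0
  have hvψ : ∀ x, x₁ ≤ x → v x ≤ C / ψ x := by
    intro x hx
    have hx0 := hmem hx
    have hW := hWr2 x hx0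
    have hψx := hψpos x hx0
    have hφu : 0 < φ x * u x := mul_pos (hφpos x hx0) (hupos x hx0)
    rw [le_div_iff₀ hψx]
    nlinarith
  have hvlim : Tendsto v atTop (𝓝 0) := by
    have hub : Tendsto (fun x => C / ψ x) atTop (𝓝 0) :=
      Tendsto.div_atTop tendsto_const_nhds hψT
    apply tendsto_of_tendsto_of_tendsto_of_le_of_le' tendsto_const_nhds hub
    · filter_upwards [eventually_ge_atTop x₁] with x hx using (hvpos x (hmem hx)).le
    · filter_upwards [eventually_ge_atTop x₁] with x hx using hvψ x hx
  -- integrability of r * Φ on Ioi x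
  have hrΦint : ∀ x : ℝ, 0 < x → IntegrableOn (fun s => r s * Φ s) (Ioi x) := by
    intro x hx
    have hfi : ∀ i : ℝ, IntegrableOn (fun s => r s * Φ s) (Ioc x i) := by
      intro i
      rcases le_total i x with h | h
      · rw [Ioc_eq_empty (by exact not_lt.2 h)]
        exact integrableOn_empty
      · have hss : Icc x i ⊆ Ioi 0 := fun t ht => lt_of_lt_of_le hx ht.1
        exact ((hrΦcont.mono hss).integrableOn_Icc).mono_set Ioc_subset_Icc_self
    have hbnd : ∀ᶠ i in (atTop : Filter ℝ), (∫ s in x..i, ‖r s * Φ s‖) ≤ v x / C := by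
      filter_upwards [eventually_ge_atTop x] with i hi
      have heq : ∫ s in x..i, ‖r s * Φ s‖ = ∫ s in Ioc x i, r s * Φ s := by
        rw [intervalIntegral.integral_of_le hi]
        apply setIntegral_congr_fun measurableSet_Ioc
        intro s hs
        have hs0 : s ∈ Ioi (0:ℝ) := lt_trans hx hs.1
        show ‖r s * Φ s‖ = r s * Φ s
        rw [Real.norm_eq_abs, abs_of_nonneg (mul_nonneg (hrpos s hs0).le (hΦpos s hs0))]
      rw [heq, le_div_iff₀ hC]
      have h1 := hvfund x i hx hi
      have h2 := hvpos i (lt_of_lt_of_le hx hi)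
      linarith
    exact integrableOn_Ioi_of_intervalIntegral_norm_bounded (v x / C) x hfi tendsto_id hbnd
  -- identity for v as a tail integral
  have hvIoi : ∀ x : ℝ, 0 < x → v x = C * ∫ s in Ioi x, r s * Φ s := by
    intro x hx
    have t1 := intervalIntegral_tendsto_integral_Ioi x (hrΦint x hx) tendsto_id
    have t2 : Tendsto (fun y => ∫ s in x..y, r s * Φ s) atTop (𝓝 (v x / C)) := by
      have base : Tendsto (fun y => (v x - v y) / C) atTop (𝓝 ((v x - 0) / C)) :=
        (tendsto_const_nhds.sub hvlim).div_const C
      rw [sub_zero] at base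
      apply base.congr'
      filter_upwards [eventually_ge_atTop x] with y hy
      rw [intervalIntegral.integral_of_le hy]
      rw [hvfund x y hx hy, mul_comm, mul_div_assoc, div_self hC.ne', mul_one]
    have huniq := tendsto_nhds_unique t1 t2
    rw [huniq]
    field_simp
  -- A and B
  set A : ℝ → ℝ := fun x => ∫ s in Ioc (0:ℝ) x, F s * Ψ s with hAdef
  set B : ℝ → ℝ := fun x => ∫ s in Ioi x, F s * Φ s with hBdef
  have hAsplit : ∀ x, x₁ ≤ x → A x - A x₁ = ∫ s in Ioc x₁ x, F s * Ψ s := by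
    intro x hx
    have hun : Ioc (0:ℝ) x₁ ∪ Ioc x₁ x = Ioc 0 x := Ioc_union_Ioc_eq_Ioc hx₁.le hx
    have hdisj : Disjoint (Ioc (0:ℝ) x₁) (Ioc x₁ x) := Ioc_disjoint_Ioc_of_le le_rfl
    have hint1 := (hFIC x₁ (by exact hx₁)).1
    have hint2 : IntegrableOn (fun s => F s * Ψ s) (Ioc x₁ x) :=
      ((hFIC x (hmem hx)).1).mono_set (Ioc_subset_Ioc_left hx₁.le)
    have hAx : A x = A x₁ + ∫ s in Ioc x₁ x, F s * Ψ s := by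
      simp only [hAdef]
      rw [← setIntegral_union hdisj measurableSet_Ioc hint1 hint2, hun]
    linarith
  have hB0 : Tendsto B atTop (𝓝 0) := by
    have hint := (hFIC x₁ (by exact hx₁)).2
    have t1 : Tendsto (fun y => ∫ s in x₁..y, F s * Φ s) atTop
        (𝓝 (∫ s in Ioi x₁, F s * Φ s)) :=
      intervalIntegral_tendsto_integral_Ioi x₁ hint tendsto_id
    have t2 : Tendsto (fun y => (∫ s in Ioi x₁, F s * Φ s) - ∫ s in x₁..y, F s * Φ s)
        atTop (𝓝 0) := by
      have := t1.const_sub (∫ s in Ioi x₁, F s * Φ s)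
      simpa using this
    apply t2.congr'
    filter_upwards [eventually_ge_atTop x₁] with y hy
    have hun : Ioc x₁ y ∪ Ioi y = Ioi x₁ := Ioc_union_Ioi_eq_Ioi hy
    have hsplit : (∫ s in Ioi x₁, F s * Φ s)
        = (∫ s in Ioc x₁ y, F s * Φ s) + ∫ s in Ioi y, F s * Φ s := by
      rw [← setIntegral_union (Ioc_disjoint_Ioi le_rfl) measurableSet_Ioi
        (hint.mono_set Ioc_subset_Ioi_self) (hFIC y (hmem hy)).2, hun]
    rw [intervalIntegral.integral_of_le hy]
    simp only [hBdef]
    linarith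
  -- helper comparison lemmas
  have hrΨintc : ∀ x, x₁ ≤ x → IntegrableOn (fun s => r s * Ψ s) (Ioc x₁ x) := by
    intro x hx
    have hss : Icc x₁ x ⊆ Ioi 0 := fun t ht => lt_of_lt_of_le hx₁ ht.1
    exact ((hrΨcont.mono hss).integrableOn_Icc).mono_set Ioc_subset_Icc_self
  have hFΨintc : ∀ x, x₁ ≤ x → IntegrableOn (fun s => F s * Ψ s) (Ioc x₁ x) := by
    intro x hx
    exact ((hFIC x (hmem hx)).1).mono_set (Ioc_subset_Ioc_left hx₁.le)
  have hAle : ∀ x c, x₁ ≤ x → (∀ s, s ∈ Ioc x₁ x → F s ≤ c * r s) →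
      C * (A x - A x₁) ≤ c * (u x - u x₁) := by
    intro x c hx hbound
    have hcmp : (∫ s in Ioc x₁ x, F s * Ψ s) ≤ ∫ s in Ioc x₁ x, c * (r s * Ψ s) := by
      apply setIntegral_mono_on (hFΨintc x hx) ((hrΨintc x hx).const_mul c) measurableSet_Ioc
      intro s hs
      have hs0 : s ∈ Ioi (0:ℝ) := lt_trans hx₁ hs.1
      have := mul_le_mul_of_nonneg_right (hbound s hs) (hΨpos s hs0)
      nlinarith
    rw [MeasureTheory.integral_const_mul] at hcmp
    rw [hAsplit x hx, hufund x₁ x hx₁ hx]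
    nlinarith [hcmp]
  have hAge : ∀ x c, x₁ ≤ x → (∀ s, s ∈ Ioc x₁ x → c * r s ≤ F s) →
      c * (u x - u x₁) ≤ C * (A x - A x₁) := by
    intro x c hx hbound
    have hcmp : (∫ s in Ioc x₁ x, c * (r s * Ψ s)) ≤ ∫ s in Ioc x₁ x, F s * Ψ s := by
      apply setIntegral_mono_on ((hrΨintc x hx).const_mul c) (hFΨintc x hx) measurableSet_Ioc
      intro s hs
      have hs0 : s ∈ Ioi (0:ℝ) := lt_trans hx₁ hs.1
      have := mul_le_mul_of_nonneg_right (hbound s hs) (hΨpos s hs0)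
      nlinarith
    rw [MeasureTheory.integral_const_mul] at hcmp
    rw [hAsplit x hx, hufund x₁ x hx₁ hx]
    nlinarith [hcmp]
  have hBge : ∀ x c, x₁ ≤ x → (∀ s, s ∈ Ioi x → c * r s ≤ F s) →
      c * v x ≤ C * B x := by
    intro x c hx hbound
    have hx0 := hmem hx
    have hcmp : (∫ s in Ioi x, c * (r s * Φ s)) ≤ ∫ s in Ioi x, F s * Φ s := by
      apply setIntegral_mono_on ((hrΦint x hx0).const_mul c) ((hFIC x hx0).2) measurableSet_Ioi
      intro s hs
      have hs0 : s ∈ Ioi (0:ℝ) := mem_Ioi.2 (lt_trans hx0 hs)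
      have := mul_le_mul_of_nonneg_right (hbound s hs) (hΦpos s hs0)
      nlinarith
    rw [MeasureTheory.integral_const_mul] at hcmp
    have hvx := hvIoi x hx0
    have h3 : c * v x = C * (c * ∫ s in Ioi x, r s * Φ s) := by rw [hvx]; ring
    have h4 := mul_le_mul_of_nonneg_left hcmp hC.le
    simp only [hBdef]
    linarith
  have hBle : ∀ x c, x₁ ≤ x → (∀ s, s ∈ Ioi x → F s ≤ c * r s) →
      C * B x ≤ c * v x := by
    intro x c hx hbound
    have hx0 := hmem hx
    have hcmp : (∫ s in Ioi x, F s * Φ s) ≤ ∫ s in Ioi x, c * (r s * Φ s) := by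
      apply setIntegral_mono_on ((hFIC x hx0).2) ((hrΦint x hx0).const_mul c) measurableSet_Ioi
      intro s hs
      have hs0 : s ∈ Ioi (0:ℝ) := mem_Ioi.2 (lt_trans hx0 hs)
      have := mul_le_mul_of_nonneg_right (hbound s hs) (hΦpos s hs0)
      nlinarith
    rw [MeasureTheory.integral_const_mul] at hcmp
    have hvx := hvIoi x hx0
    have h3 : c * v x = C * (c * ∫ s in Ioi x, r s * Φ s) := by rw [hvx]; ring
    have h4 := mul_le_mul_of_nonneg_left hcmp hC.le
    simp only [hBdef]
    linarith
  -- pointwise F = (F/r) * r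
  have hFgr : ∀ s ∈ Ioi (0:ℝ), F s = F s / r s * r s :=
    fun s hs => (div_mul_cancel₀ (F s) (hrpos s hs).ne').symm
  -- φ is antitone
  have hφanti : ∀ x, x₁ ≤ x → φ x ≤ φ x₁ := by
    have hsa : StrictAntiOn φ (Ici x₁) := by
      apply strictAntiOn_of_deriv_neg (convex_Ici x₁)
      · exact hφcont.mono (fun t ht => lt_of_lt_of_le hx₁ ht)
      · intro t ht
        rw [interior_Ici] at ht
        have ht0 : t ∈ Ioi (0:ℝ) := lt_trans hx₁ ht
        rw [(hφ1 t ht0).deriv]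
        exact hφ'neg t ht0
    intro x hx
    rcases eq_or_lt_of_le hx with h | h
    · rw [← h]
    · exact (hsa self_mem_Ici hx h).le
  -- other positivity for core lemma
  have hψpos' : ∀ x, x₁ ≤ x → 0 < ψ x := fun x hx => hψpos x (hmem hx)
  have hφpos' : ∀ x, x₁ ≤ x → 0 < φ x := fun x hx => hφpos x (hmem hx)
  have hupos' : ∀ x, x₁ ≤ x → 0 < u x := fun x hx => hupos x (hmem hx)
  have hvpos' : ∀ x, x₁ ≤ x → 0 ≤ v x := fun x hx => (hvpos x (hmem hx)).le
  have hWr2' : ∀ x, x₁ ≤ x → φ x * u x + v x * ψ x = C := fun x hx => hWr2 x (hmem hx)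
  have hRAB : ∀ x, x₁ ≤ x → R x = φ x * A x + ψ x * B x := by
    intro x hx
    simp only [hAdef, hBdef]
    exact hRdef x (hmem hx)
  -- apply the core lemma
  set g : ℝ → ℝ := fun x => F x / r x with hgdef
  have key : Tendsto (fun x => A x / (u x * ψ x)) atTop (𝓝 0) := by
    rcases hmono with hm | hm
    · exact core_lemma x₁ C hC A B R g u v φ ψ hψpos' hφpos' hupos' hvpos' humono hWr2'
        (by
          intro x hx
          have h := hAle x (g x) hx (fun s hs => by
            have hs0 : s ∈ Ioi (0:ℝ) := lt_trans hx₁ hs.1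
            rw [hFgr s hs0]
            exact mul_le_mul_of_nonneg_right (hm hs.1.le hx hs.2) (hrpos s hs0).le)
          linarith)
        (by
          intro x hx
          have h := hAge x (g x₁) hx (fun s hs => by
            have hs0 : s ∈ Ioi (0:ℝ) := lt_trans hx₁ hs.1
            rw [hFgr s hs0]
            exact mul_le_mul_of_nonneg_right (hm self_mem_Ici hs.1.le hs.1.le) (hrpos s hs0).le)
          linarith)
        (by
          intro x hx
          exact hBge x (g x) hx (fun s hs => by
            have hs0 : s ∈ Ioi (0:ℝ) := mem_Ioi.2 (lt_trans (hmem hx) hs)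
            rw [hFgr s hs0]
            exact mul_le_mul_of_nonneg_right (hm hx (hx.trans hs.le) hs.le) (hrpos s hs0).le))
        hRAB hφanti hRψT hB0 hψT
    · have hneg := core_lemma x₁ C hC (fun x => -A x) (fun x => -B x) (fun x => -R x)
        (fun x => -g x) u v φ ψ hψpos' hφpos' hupos' hvpos' humono hWr2'
        (by
          intro x hx
          have h := hAge x (g x) hx (fun s hs => by
            have hs0 : s ∈ Ioi (0:ℝ) := lt_trans hx₁ hs.1
            rw [hFgr s hs0]
            exact mul_le_mul_of_nonneg_right (hm hs.1.le hx hs.2) (hrpos s hs0).le)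
          linarith)
        (by
          intro x hx
          have h := hAle x (g x₁) hx (fun s hs => by
            have hs0 : s ∈ Ioi (0:ℝ) := lt_trans hx₁ hs.1
            rw [hFgr s hs0]
            exact mul_le_mul_of_nonneg_right (hm self_mem_Ici hs.1.le hs.1.le) (hrpos s hs0).le)
          linarith)
        (by
          intro x hx
          have h := hBle x (g x) hx (fun s hs => by
            have hs0 : s ∈ Ioi (0:ℝ) := mem_Ioi.2 (lt_trans (hmem hx) hs)
            rw [hFgr s hs0]
            exact mul_le_mul_of_nonneg_right (hm hx (hx.trans hs.le) hs.le) (hrpos s hs0).le)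
          linarith)
        (by
          intro x hx
          have h := hRAB x hx
          linarith)
        hφanti
        (by
          have := hRψT.neg
          simp only [neg_zero] at this
          apply this.congr
          intro x
          rw [neg_div])
        (by
          have := hB0.neg
          simpa using this)
        hψT
      have := hneg.neg
      simp only [neg_zero] at this
      apply this.congr
      intro x
      rw [neg_div, neg_neg]
  -- final assembly
  have heq : ∀ᶠ x in atTop, R x / ψ x - C * (A x / (u x * ψ x)) = R' x / ψ' x := by
    filter_upwards [eventually_ge_atTop x₁] with x hx
    have hx0 := hmem hx
    have h1 := hR'def x hx0
    have h2 := hRdef x hx0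
    have hW := hWr x hx0
    have hψ'x := (hψ'pos x hx0).ne'
    have hψx := (hψpos x hx0).ne'
    have hpx := (hp'pos x hx0).ne'
    have hAx : A x = ∫ s in Ioc (0:ℝ) x, F s * Ψ s := rfl
    have hBx : B x = ∫ s in Ioi x, F s * Φ s := rfl
    have hux : u x = ψ' x / p' x := rfl
    rw [h1, h2, ← hAx, ← hBx, hux]
    field_simp
    linear_combination (A x) * hW
  have hfin : Tendsto (fun x => R x / ψ x - C * (A x / (u x * ψ x))) atTop (𝓝 0) := by
    have := hRψT.sub ((key.const_mul C))
    simpa using this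
  exact Tendsto.congr' heq hfin
end

section
/- Let F : (0,∞) → ℝ be a continuous function satisfying condition (IC). Then R_F is C² on (0,∞), satisfies (1/2)σ(x)²R_F''(x) + b(x)R_F'(x) − r(x)R_F(x) + F(x) = 0 for all x > 0, and the function R_F'/ψ' is differentiable on (0,∞) with derivative d/dx (R_F'(x)/ψ'(x)) = (2 C r(x) p'(x) / (σ(x)ψ'(x))²) · Q_F(x) for all x > 0. -/
open Filter Set MeasureTheory Topology

/-- FTC for the left piece: derivative of `y ↦ ∫_{(0,y]} f`. -/
lemma aux_hasDerivAt_Ioc_integral (f : ℝ → ℝ) (hf : ContinuousOn f (Ioi 0)) (x : ℝ) (hx : (0:ℝ) < x)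
    (hint : ∀ y ∈ Ioi (0:ℝ), IntegrableOn f (Ioc 0 y)) :
    HasDerivAt (fun y => ∫ s in Ioc (0:ℝ) y, f s) (f x) x := by
  set ε := x/2 with hε
  have hε0 : 0 < ε := by positivity
  have hεx : ε < x := by linarith
  have key : ∀ y ∈ Ioi ε, (∫ s in Ioc (0:ℝ) y, f s) = (∫ s in Ioc (0:ℝ) ε, f s) + ∫ s in ε..y, f s := by
    intro y hy
    have hy' : ε ≤ y := le_of_lt hy
    have hy0 : (0:ℝ) < y := lt_trans hε0 hy
    rw [intervalIntegral.integral_of_le hy', ← setIntegral_union (Ioc_disjoint_Ioc_of_le le_rfl) measurableSet_Ioc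
      ((hint y hy0).mono_set (Ioc_subset_Ioc le_rfl hy'))
      ((hint y hy0).mono_set (Ioc_subset_Ioc hε0.le le_rfl)),
      Ioc_union_Ioc_eq_Ioc hε0.le hy']
  have hii : IntervalIntegrable f volume ε x := by
    rw [intervalIntegrable_iff_integrableOn_Ioc_of_le hεx.le]
    exact (hint x hx).mono_set (Ioc_subset_Ioc hε0.le le_rfl)
  have hmeas : StronglyMeasurableAtFilter f (𝓝 x) volume :=
    hf.stronglyMeasurableAtFilter isOpen_Ioi x hx
  have hca : ContinuousAt f x := hf.continuousAt (isOpen_Ioi.mem_nhds hx)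
  have hd : HasDerivAt (fun y => (∫ s in Ioc (0:ℝ) ε, f s) + ∫ s in ε..y, f s) (f x) x :=
    ((intervalIntegral.integral_hasDerivAt_right hii hmeas hca).const_add _)
  exact hd.congr_of_eventuallyEq (eventuallyEq_of_mem (isOpen_Ioi.mem_nhds hεx) key)

/-- FTC for the right piece: derivative of `y ↦ ∫_{(y,∞)} f`. -/
lemma aux_hasDerivAt_Ioi_integral (f : ℝ → ℝ) (hf : ContinuousOn f (Ioi 0)) (x : ℝ) (hx : (0:ℝ) < x)
    (hint : ∀ y ∈ Ioi (0:ℝ), IntegrableOn f (Ioi y)) :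
    HasDerivAt (fun y => ∫ s in Ioi y, f s) (-(f x)) x := by
  set ε := x/2 with hε
  have hε0 : 0 < ε := by positivity
  have hεx : ε < x := by linarith
  have key : ∀ y ∈ Ioi ε, (∫ s in Ioi y, f s) = (∫ s in Ioi ε, f s) - ∫ s in ε..y, f s := by
    intro y hy
    have hy' : ε ≤ y := le_of_lt hy
    rw [intervalIntegral.integral_of_le hy', eq_sub_iff_add_eq, add_comm,
      ← setIntegral_union Ioc_disjoint_Ioi_same measurableSet_Ioi
      ((hint ε hε0).mono_set (Ioc_subset_Ioi_self))
      ((hint ε hε0).mono_set (Ioi_subset_Ioi hy')),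
      Ioc_union_Ioi_eq_Ioi hy']
  have hii : IntervalIntegrable f volume ε x := by
    rw [intervalIntegrable_iff_integrableOn_Ioc_of_le hεx.le]
    exact (hint ε hε0).mono_set Ioc_subset_Ioi_self
  have hmeas : StronglyMeasurableAtFilter f (𝓝 x) volume :=
    hf.stronglyMeasurableAtFilter isOpen_Ioi x hx
  have hca : ContinuousAt f x := hf.continuousAt (isOpen_Ioi.mem_nhds hx)
  have hd : HasDerivAt (fun y => (∫ s in Ioi ε, f s) - ∫ s in ε..y, f s) (-(f x)) x := by
    simpa using ((intervalIntegral.integral_hasDerivAt_right hii hmeas hca).const_sub _)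
  exact hd.congr_of_eventuallyEq (eventuallyEq_of_mem (isOpen_Ioi.mem_nhds hεx) key)

theorem stmt_8
    (b σ r : ℝ → ℝ) (r₀ r₁ : ℝ)
    (hbc : ContinuousOn b (Ioi 0))
    (hσc : ContinuousOn σ (Ioi 0))
    (hrc : ContinuousOn r (Ioi 0))
    (hσpos : ∀ x ∈ Ioi (0:ℝ), 0 < σ x)
    (hr₀ : 0 < r₀) (hr₀₁ : r₀ ≤ r₁)
    (hrbd : ∀ x ∈ Ioi (0:ℝ), r₀ ≤ r x ∧ r x ≤ r₁)
    (p' : ℝ → ℝ)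
    (hp' : ∀ x ∈ Ioi (0:ℝ), p' x = Real.exp (-(2:ℝ) * ∫ s in (1:ℝ)..x, b s / (σ s) ^ 2))
    (φ ψ φ' ψ' φ'' ψ'' : ℝ → ℝ)
    (hφ1 : ∀ x ∈ Ioi (0:ℝ), HasDerivAt φ (φ' x) x)
    (hφ2 : ∀ x ∈ Ioi (0:ℝ), HasDerivAt φ' (φ'' x) x)
    (hφ2c : ContinuousOn φ'' (Ioi 0))
    (hψ1 : ∀ x ∈ Ioi (0:ℝ), HasDerivAt ψ (ψ' x) x)
    (hψ2 : ∀ x ∈ Ioi (0:ℝ), HasDerivAt ψ' (ψ'' x) x)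
    (hψ2c : ContinuousOn ψ'' (Ioi 0))
    (hφpos : ∀ x ∈ Ioi (0:ℝ), 0 < φ x)
    (hφ'neg : ∀ x ∈ Ioi (0:ℝ), φ' x < 0)
    (hψpos : ∀ x ∈ Ioi (0:ℝ), 0 < ψ x)
    (hψ'pos : ∀ x ∈ Ioi (0:ℝ), 0 < ψ' x)
    (hφODE : ∀ x ∈ Ioi (0:ℝ), (1/2) * σ x ^ 2 * φ'' x + b x * φ' x - r x * φ x = 0)
    (hψODE : ∀ x ∈ Ioi (0:ℝ), (1/2) * σ x ^ 2 * ψ'' x + b x * ψ' x - r x * ψ x = 0)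
    (C : ℝ) (hC : 0 < C)
    (hWr : ∀ x ∈ Ioi (0:ℝ), φ x * ψ' x - φ' x * ψ x = C * p' x)
    (Ψ Φ : ℝ → ℝ)
    (hΨ : ∀ x ∈ Ioi (0:ℝ), Ψ x = 2 * ψ x / (C * σ x ^ 2 * p' x))
    (hΦ : ∀ x ∈ Ioi (0:ℝ), Φ x = 2 * φ x / (C * σ x ^ 2 * p' x))
    (F : ℝ → ℝ) (hFc : ContinuousOn F (Ioi 0))
    (hFIC : ∀ x ∈ Ioi (0:ℝ),
      IntegrableOn (fun s => F s * Ψ s) (Ioc 0 x) ∧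
      IntegrableOn (fun s => F s * Φ s) (Ioi x))
    (R : ℝ → ℝ)
    (hRdef : ∀ x ∈ Ioi (0:ℝ),
      R x = φ x * (∫ s in Ioc (0:ℝ) x, F s * Ψ s) + ψ x * (∫ s in Ioi x, F s * Φ s))
    (Q : ℝ → ℝ)
    (hQdef : ∀ x ∈ Ioi (0:ℝ),
      Q x = (∫ s in Ioc (0:ℝ) x, F s * Ψ s) - F x / r x * (ψ' x / (C * p' x)))
    :
    ContDiffOn ℝ 2 R (Ioi 0) ∧
    ∀ x ∈ Ioi (0:ℝ),
      (1/2) * σ x ^ 2 * deriv (deriv R) x + b x * deriv R x - r x * R x + F x = 0 ∧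
      HasDerivAt (fun y => deriv R y / ψ' y)
        (2 * C * r x * p' x / (σ x * ψ' x) ^ 2 * Q x) x := by
  have hCne : C ≠ 0 := ne_of_gt hC
  have hSopen : IsOpen (Ioi (0:ℝ)) := isOpen_Ioi
  have hp'pos : ∀ x ∈ Ioi (0:ℝ), 0 < p' x := by
    intro x hx
    have h1 : 0 < φ x * ψ' x - φ' x * ψ x := by
      nlinarith [mul_pos (hφpos x hx) (hψ'pos x hx),
        mul_neg_of_neg_of_pos (hφ'neg x hx) (hψpos x hx)]
    rw [hWr x hx] at h1
    rcases lt_trichotomy (p' x) 0 with h | h | h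
    · nlinarith
    · rw [h] at h1; simp at h1
    · exact h
  -- continuity of the building blocks
  have hφcont : ContinuousOn φ (Ioi 0) := fun x hx => (hφ1 x hx).continuousAt.continuousWithinAt
  have hφ'cont : ContinuousOn φ' (Ioi 0) := fun x hx => (hφ2 x hx).continuousAt.continuousWithinAt
  have hψcont : ContinuousOn ψ (Ioi 0) := fun x hx => (hψ1 x hx).continuousAt.continuousWithinAt
  have hψ'cont : ContinuousOn ψ' (Ioi 0) := fun x hx => (hψ2 x hx).continuousAt.continuousWithinAt
  have hp'c : ContinuousOn p' (Ioi 0) :=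
    (((hφcont.mul hψ'cont).sub (hφ'cont.mul hψcont)).div_const C).congr
      (fun x hx => by show p' x = (φ x * ψ' x - φ' x * ψ x) / C; rw [hWr x hx]; field_simp)
  have hDne : ∀ x ∈ Ioi (0:ℝ), C * σ x ^ 2 * p' x ≠ 0 := by
    intro x hx
    have := (hσpos x hx).ne'
    have := (hp'pos x hx).ne'
    positivity
  have hDc : ContinuousOn (fun x => C * σ x ^ 2 * p' x) (Ioi 0) :=
    (continuousOn_const.mul (hσc.pow 2)).mul hp'c
  have hΨc : ContinuousOn Ψ (Ioi 0) :=
    (((continuousOn_const.mul hψcont).div hDc hDne)).congr (fun x hx => hΨ x hx)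
  have hΦc : ContinuousOn Φ (Ioi 0) :=
    (((continuousOn_const.mul hφcont).div hDc hDne)).congr (fun x hx => hΦ x hx)
  -- the two integral pieces
  set A : ℝ → ℝ := fun y => ∫ s in Ioc (0:ℝ) y, F s * Ψ s with hA
  set Bf : ℝ → ℝ := fun y => ∫ s in Ioi y, F s * Φ s with hB
  have hRloc : ∀ x ∈ Ioi (0:ℝ), R x = φ x * A x + ψ x * Bf x := by
    intro x hx; simp only [hA, hB]; exact hRdef x hx
  have hQloc : ∀ x ∈ Ioi (0:ℝ), Q x = A x - F x / r x * (ψ' x / (C * p' x)) := by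
    intro x hx; simp only [hA]; exact hQdef x hx
  have hAd : ∀ x ∈ Ioi (0:ℝ), HasDerivAt A (F x * Ψ x) x := by
    intro x hx; rw [hA]
    exact aux_hasDerivAt_Ioc_integral _ (hFc.mul hΨc) x hx (fun y hy => (hFIC y hy).1)
  have hBd : ∀ x ∈ Ioi (0:ℝ), HasDerivAt Bf (-(F x * Φ x)) x := by
    intro x hx; rw [hB]
    exact aux_hasDerivAt_Ioi_integral _ (hFc.mul hΦc) x hx (fun y hy => (hFIC y hy).2)
  have hAc : ContinuousOn A (Ioi 0) := fun x hx => (hAd x hx).continuousAt.continuousWithinAt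
  have hBc : ContinuousOn Bf (Ioi 0) := fun x hx => (hBd x hx).continuousAt.continuousWithinAt
  -- first derivative of R
  have hRd1 : ∀ x ∈ Ioi (0:ℝ), HasDerivAt R (φ' x * A x + ψ' x * Bf x) x := by
    intro x hx
    have h0 : HasDerivAt (fun y => φ y * A y + ψ y * Bf y)
        (φ' x * A x + φ x * (F x * Ψ x) + (ψ' x * Bf x + ψ x * (-(F x * Φ x)))) x :=
      ((hφ1 x hx).mul (hAd x hx)).add ((hψ1 x hx).mul (hBd x hx))
    have hcross : φ x * (F x * Ψ x) + ψ x * (-(F x * Φ x)) = 0 := by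
      rw [hΨ x hx, hΦ x hx]; ring
    have h1 : HasDerivAt (fun y => φ y * A y + ψ y * Bf y) (φ' x * A x + ψ' x * Bf x) x := by
      convert h0 using 1; linarith [hcross]
    exact h1.congr_of_eventuallyEq
      (eventuallyEq_of_mem (hSopen.mem_nhds hx) (fun y hy => hRloc y hy))
  -- second derivative of R
  have hRd2 : ∀ x ∈ Ioi (0:ℝ), HasDerivAt (fun y => φ' y * A y + ψ' y * Bf y)
      (φ'' x * A x + ψ'' x * Bf x - 2 * F x / σ x ^ 2) x := by
    intro x hx
    have hσne : σ x ≠ 0 := (hσpos x hx).ne'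
    have hpne : p' x ≠ 0 := (hp'pos x hx).ne'
    have h0 : HasDerivAt (fun y => φ' y * A y + ψ' y * Bf y)
        (φ'' x * A x + φ' x * (F x * Ψ x) + (ψ'' x * Bf x + ψ' x * (-(F x * Φ x)))) x :=
      ((hφ2 x hx).mul (hAd x hx)).add ((hψ2 x hx).mul (hBd x hx))
    have hcross : φ' x * (F x * Ψ x) + ψ' x * (-(F x * Φ x)) = -(2 * F x / σ x ^ 2) := by
      rw [hΨ x hx, hΦ x hx]
      have hw := hWr x hx
      field_simp
      linear_combination (-F x) * hw
    convert h0 using 1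
    linarith [hcross]
  have hderivR : ∀ x ∈ Ioi (0:ℝ), deriv R x = φ' x * A x + ψ' x * Bf x :=
    fun x hx => (hRd1 x hx).deriv
  have hderiv2 : ∀ x ∈ Ioi (0:ℝ),
      deriv (deriv R) x = φ'' x * A x + ψ'' x * Bf x - 2 * F x / σ x ^ 2 := by
    intro x hx
    have heq : deriv R =ᶠ[𝓝 x] (fun y => φ' y * A y + ψ' y * Bf y) :=
      eventuallyEq_of_mem (hSopen.mem_nhds hx) (fun y hy => hderivR y hy)
    exact heq.deriv_eq.trans (hRd2 x hx).deriv
  constructor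
  · -- C² regularity
    have h2 : (2 : WithTop ℕ∞) = 1 + 1 := by norm_num
    rw [h2, contDiffOn_succ_iff_deriv_of_isOpen hSopen]
    refine ⟨fun x hx => (hRd1 x hx).differentiableAt.differentiableWithinAt, by simp, ?_⟩
    have h1 : (1 : WithTop ℕ∞) = 0 + 1 := by norm_num
    have hc1 : ContDiffOn ℝ 1 (fun y => φ' y * A y + ψ' y * Bf y) (Ioi 0) := by
      rw [h1, contDiffOn_succ_iff_deriv_of_isOpen hSopen]
      refine ⟨fun x hx => (hRd2 x hx).differentiableAt.differentiableWithinAt, by simp, ?_⟩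
      rw [contDiffOn_zero]
      have hc2 : ContinuousOn (fun x => φ'' x * A x + ψ'' x * Bf x - 2 * F x / σ x ^ 2) (Ioi 0) :=
        ((hφ2c.mul hAc).add (hψ2c.mul hBc)).sub
          ((continuousOn_const.mul hFc).div (hσc.pow 2) (fun x hx => pow_ne_zero 2 (hσpos x hx).ne'))
      exact hc2.congr (fun x hx => (hRd2 x hx).deriv)
    exact hc1.congr (fun x hx => hderivR x hx)
  · intro x hx
    have hσne : σ x ≠ 0 := (hσpos x hx).ne'
    have hpne : p' x ≠ 0 := (hp'pos x hx).ne'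
    have hψ'ne : ψ' x ≠ 0 := (hψ'pos x hx).ne'
    have hrne : r x ≠ 0 := ne_of_gt (lt_of_lt_of_le hr₀ (hrbd x hx).1)
    have h1 := hφODE x hx
    have h2 := hψODE x hx
    have hw := hWr x hx
    constructor
    · rw [hderiv2 x hx, hderivR x hx, hRloc x hx]
      field_simp
      linear_combination (2 * A x) * h1 + (2 * Bf x) * h2
    · have hdiv : HasDerivAt (fun y => (φ' y * A y + ψ' y * Bf y) / ψ' y)
          (((φ'' x * A x + ψ'' x * Bf x - 2 * F x / σ x ^ 2) * ψ' x
            - (φ' x * A x + ψ' x * Bf x) * ψ'' x) / (ψ' x) ^ 2) x :=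
        (hRd2 x hx).div (hψ2 x hx) hψ'ne
      have heq : (fun y => deriv R y / ψ' y) =ᶠ[𝓝 x]
          (fun y => (φ' y * A y + ψ' y * Bf y) / ψ' y) :=
        eventuallyEq_of_mem (hSopen.mem_nhds hx) (fun y hy => by rw [hderivR y hy])
      have hval : ((φ'' x * A x + ψ'' x * Bf x - 2 * F x / σ x ^ 2) * ψ' x
            - (φ' x * A x + ψ' x * Bf x) * ψ'' x) / (ψ' x) ^ 2
          = 2 * C * r x * p' x / (σ x * ψ' x) ^ 2 * Q x := by
        rw [hQloc x hx]
        set M := 2 * A x * ψ' x ^ 2 * r x * C * p' x * σ x ^ 2 with hM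
        field_simp
        linear_combination (2 * A x * ψ' x) * h1 - (2 * A x * φ' x) * h2 + (2 * A x * r x) * hw
      rw [← hval]
      exact hdiv.congr_of_eventuallyEq heq
end

section
/- Assume that lim_{x↓0} ψ'(x)/p'(x) = 0. Let F : (0,∞) → ℝ be a Borel function satisfying condition (IC) and let x† > 0. If the restriction of F/r to [x†,∞) is nonincreasing, then Q_F is nondecreasing on [x†,∞); if the restriction of F/r to [x†,∞) is nondecreasing, then Q_F is nonincreasing on [x†,∞). -/
open Filter Set MeasureTheory Topology

theorem stmt_9
    (b σ r : ℝ → ℝ) (r₀ r₁ : ℝ)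
    (hbc : ContinuousOn b (Ioi 0))
    (hσc : ContinuousOn σ (Ioi 0))
    (hrc : ContinuousOn r (Ioi 0))
    (hσpos : ∀ x ∈ Ioi (0:ℝ), 0 < σ x)
    (hr₀ : 0 < r₀) (hr₀₁ : r₀ ≤ r₁)
    (hrbd : ∀ x ∈ Ioi (0:ℝ), r₀ ≤ r x ∧ r x ≤ r₁)
    (p' : ℝ → ℝ)
    (hp' : ∀ x ∈ Ioi (0:ℝ), p' x = Real.exp (-(2:ℝ) * ∫ s in (1:ℝ)..x, b s / (σ s) ^ 2))
    (φ ψ φ' ψ' φ'' ψ'' : ℝ → ℝ)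
    (hφ1 : ∀ x ∈ Ioi (0:ℝ), HasDerivAt φ (φ' x) x)
    (hφ2 : ∀ x ∈ Ioi (0:ℝ), HasDerivAt φ' (φ'' x) x)
    (hφ2c : ContinuousOn φ'' (Ioi 0))
    (hψ1 : ∀ x ∈ Ioi (0:ℝ), HasDerivAt ψ (ψ' x) x)
    (hψ2 : ∀ x ∈ Ioi (0:ℝ), HasDerivAt ψ' (ψ'' x) x)
    (hψ2c : ContinuousOn ψ'' (Ioi 0))
    (hφpos : ∀ x ∈ Ioi (0:ℝ), 0 < φ x)
    (hφ'neg : ∀ x ∈ Ioi (0:ℝ), φ' x < 0)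
    (hψpos : ∀ x ∈ Ioi (0:ℝ), 0 < ψ x)
    (hψ'pos : ∀ x ∈ Ioi (0:ℝ), 0 < ψ' x)
    (hφODE : ∀ x ∈ Ioi (0:ℝ), (1/2) * σ x ^ 2 * φ'' x + b x * φ' x - r x * φ x = 0)
    (hψODE : ∀ x ∈ Ioi (0:ℝ), (1/2) * σ x ^ 2 * ψ'' x + b x * ψ' x - r x * ψ x = 0)
    (C : ℝ) (hC : 0 < C)
    (hWr : ∀ x ∈ Ioi (0:ℝ), φ x * ψ' x - φ' x * ψ x = C * p' x)
    (Ψ Φ : ℝ → ℝ)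
    (hΨ : ∀ x ∈ Ioi (0:ℝ), Ψ x = 2 * ψ x / (C * σ x ^ 2 * p' x))
    (hΦ : ∀ x ∈ Ioi (0:ℝ), Φ x = 2 * φ x / (C * σ x ^ 2 * p' x))
    (hψ'p'0 : Tendsto (fun x => ψ' x / p' x) (𝓝[>] (0:ℝ)) (𝓝 0))
    (F : ℝ → ℝ) (hFm : Measurable F)
    (hFIC : ∀ x ∈ Ioi (0:ℝ),
      IntegrableOn (fun s => F s * Ψ s) (Ioc 0 x) ∧
      IntegrableOn (fun s => F s * Φ s) (Ioi x))
    (Q : ℝ → ℝ)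
    (hQdef : ∀ x ∈ Ioi (0:ℝ),
      Q x = (∫ s in Ioc (0:ℝ) x, F s * Ψ s) - F x / r x * (ψ' x / (C * p' x)))
    (xd : ℝ) (hxd : 0 < xd) :
    (AntitoneOn (fun x => F x / r x) (Ici xd) → MonotoneOn Q (Ici xd)) ∧
    (MonotoneOn (fun x => F x / r x) (Ici xd) → AntitoneOn Q (Ici xd)) := by

  clear hψ'p'0 hφ1 hφ2 hφ2c hφpos hφ'neg hWr hΦ
  have hp'pos : ∀ x ∈ Ioi (0:ℝ), 0 < p' x := by
    intro x hx; rw [hp' x hx]; exact Real.exp_pos _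
  have hσne : ∀ x ∈ Ioi (0:ℝ), σ x ^ 2 ≠ 0 := fun x hx => pow_ne_zero _ (hσpos x hx).ne'
  have hbσc : ContinuousOn (fun s => b s / σ s ^ 2) (Ioi 0) :=
    hbc.div (hσc.pow 2) hσne
  -- derivative of p'
  have hp'deriv : ∀ x ∈ Ioi (0:ℝ), HasDerivAt p' (-(2 * (b x / σ x ^ 2)) * p' x) x := by
    intro x hx
    have hsub : uIcc (1:ℝ) x ⊆ Ioi 0 := fun s hs =>
      lt_of_lt_of_le (lt_min one_pos hx) hs.1
    have hIint : IntervalIntegrable (fun s => b s / σ s ^ 2) volume 1 x :=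
      (hbσc.mono hsub).intervalIntegrable
    have hmeas : StronglyMeasurableAtFilter (fun s => b s / σ s ^ 2) (𝓝 x) volume :=
      hbσc.stronglyMeasurableAtFilter isOpen_Ioi x hx
    have hca : ContinuousAt (fun s => b s / σ s ^ 2) x :=
      hbσc.continuousAt (isOpen_Ioi.mem_nhds hx)
    have hI : HasDerivAt (fun z => ∫ s in (1:ℝ)..z, b s / σ s ^ 2) (b x / σ x ^ 2) x :=
      intervalIntegral.integral_hasDerivAt_right hIint hmeas hca
    have hE : HasDerivAt (fun z => Real.exp (-(2:ℝ) * ∫ s in (1:ℝ)..z, b s / σ s ^ 2))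
        (Real.exp (-(2:ℝ) * ∫ s in (1:ℝ)..x, b s / σ s ^ 2) * (-(2:ℝ) * (b x / σ x ^ 2))) x :=
      (hI.const_mul (-(2:ℝ))).exp
    have hev : p' =ᶠ[𝓝 x] fun z => Real.exp (-(2:ℝ) * ∫ s in (1:ℝ)..z, b s / σ s ^ 2) := by
      filter_upwards [isOpen_Ioi.mem_nhds hx] with z hz
      exact hp' z hz
    have := hE.congr_of_eventuallyEq hev
    rw [← hp' x hx] at this
    exact this.congr_deriv (by ring)
  -- derivatives/positivity of g
  set g : ℝ → ℝ := fun x => ψ' x / (C * p' x) with hg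
  have hgpos : ∀ x ∈ Ioi (0:ℝ), 0 < g x := fun x hx =>
    div_pos (hψ'pos x hx) (mul_pos hC (hp'pos x hx))
  have hgderiv : ∀ x ∈ Ioi (0:ℝ), HasDerivAt g (r x * Ψ x) x := by
    intro x hx
    have hden : C * p' x ≠ 0 := (mul_pos hC (hp'pos x hx)).ne'
    have hD : HasDerivAt (fun z => C * p' z) (C * (-(2 * (b x / σ x ^ 2)) * p' x)) x :=
      (hp'deriv x hx).const_mul C
    have h1 : HasDerivAt g
        ((ψ'' x * (C * p' x) - ψ' x * (C * (-(2 * (b x / σ x ^ 2)) * p' x))) / (C * p' x) ^ 2) x :=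
      (hψ2 x hx).div hD hden
    convert h1 using 1
    have hode := hψODE x hx
    have hψ''eq : ψ'' x = 2 * (r x * ψ x - b x * ψ' x) / σ x ^ 2 := by
      rw [eq_div_iff (hσne x hx)]; linarith
    rw [hΨ x hx, hψ''eq]
    field_simp [hσne x hx, hC.ne', (hp'pos x hx).ne']
    ring
  -- continuity of r * Ψ
  have hψc : ContinuousOn ψ (Ioi 0) := fun x hx =>
    ((hψ1 x hx).continuousAt.continuousWithinAt)
  have hp'c : ContinuousOn p' (Ioi 0) := fun x hx =>
    ((hp'deriv x hx).continuousAt.continuousWithinAt)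
  have hΨc : ContinuousOn Ψ (Ioi 0) := by
    have : ContinuousOn (fun x => 2 * ψ x / (C * σ x ^ 2 * p' x)) (Ioi 0) := by
      apply ContinuousOn.div
      · exact continuousOn_const.mul hψc
      · exact (continuousOn_const.mul (hσc.pow 2)).mul hp'c
      · intro x hx
        exact (mul_pos (mul_pos hC (pow_pos (hσpos x hx) 2)) (hp'pos x hx)).ne'
    exact this.congr hΨ
  have hrΨc : ContinuousOn (fun s => r s * Ψ s) (Ioi 0) := hrc.mul hΨc
  have hΨpos : ∀ x ∈ Ioi (0:ℝ), 0 < Ψ x := by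
    intro x hx
    rw [hΨ x hx]
    exact div_pos (by linarith [hψpos x hx])
      (mul_pos (mul_pos hC (pow_pos (hσpos x hx) 2)) (hp'pos x hx))
  have hrΨpos : ∀ x ∈ Ioi (0:ℝ), 0 < r x * Ψ x := fun x hx =>
    mul_pos (lt_of_lt_of_le hr₀ (hrbd x hx).1) (hΨpos x hx)
  -- key identity
  have key : ∀ x ∈ Ici xd, ∀ y ∈ Ici xd, x ≤ y →
      Q y - Q x = (∫ s in Ioc x y, (F s / r s - F y / r y) * (r s * Ψ s))
        + (F x / r x - F y / r y) * g x := by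
    intro x hx y hy hxy
    have hx0 : (0:ℝ) < x := lt_of_lt_of_le hxd hx
    have hy0 : (0:ℝ) < y := lt_of_lt_of_le hxd hy
    have hsub2 : Icc x y ⊆ Ioi 0 := fun s hs => lt_of_lt_of_le hx0 hs.1
    have hsub3 : Ioc x y ⊆ Ioi 0 := fun s hs => lt_of_lt_of_le hx0 hs.1.le
    -- FTC for g
    have hftc : g y - g x = ∫ s in Ioc x y, r s * Ψ s := by
      have hint : IntervalIntegrable (fun s => r s * Ψ s) volume x y :=
        (hrΨc.mono (by rw [uIcc_of_le hxy]; exact hsub2)).intervalIntegrable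
      have h := intervalIntegral.integral_eq_sub_of_hasDerivAt
        (f := g) (f' := fun s => r s * Ψ s) (a := x) (b := y)
        (fun t ht => hgderiv t (hsub2 (by rwa [uIcc_of_le hxy] at ht))) hint
      rw [intervalIntegral.integral_of_le hxy] at h
      exact h.symm
    -- integrabilities
    have hFΨint : IntegrableOn (fun s => F s * Ψ s) (Ioc x y) :=
      ((hFIC y hy0).1).mono_set (fun s hs => ⟨hx0.trans hs.1, hs.2⟩)
    have hrΨint : IntegrableOn (fun s => r s * Ψ s) (Ioc x y) :=
      ((hrΨc.mono hsub2).integrableOn_compact isCompact_Icc).mono_set Ioc_subset_Icc_self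
    -- split the integral over Ioc 0 y
    have hsplit : (∫ s in Ioc (0:ℝ) y, F s * Ψ s)
        = (∫ s in Ioc (0:ℝ) x, F s * Ψ s) + ∫ s in Ioc x y, F s * Ψ s := by
      rw [← setIntegral_union (Ioc_disjoint_Ioc_of_le le_rfl) measurableSet_Ioc
        (((hFIC y hy0).1).mono_set (fun s hs => ⟨hs.1, hs.2.trans hxy⟩)) hFΨint,
        Ioc_union_Ioc_eq_Ioc hx0.le hxy]
    have hint_eq : (∫ s in Ioc x y, (F s / r s - F y / r y) * (r s * Ψ s))
        = (∫ s in Ioc x y, F s * Ψ s) - (F y / r y) * ∫ s in Ioc x y, r s * Ψ s := by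
      rw [← integral_const_mul, ← integral_sub hFΨint (hrΨint.const_mul _)]
      apply setIntegral_congr_fun measurableSet_Ioc
      intro s hs
      have hs0 : (0:ℝ) < s := hsub3 hs
      have hrne : r s ≠ 0 := (lt_of_lt_of_le hr₀ (hrbd s hs0).1).ne'
      field_simp
    rw [hQdef x hx0, hQdef y hy0, hsplit, hint_eq]
    have e1 : ψ' x / (C * p' x) = g x := rfl
    have e2 : ψ' y / (C * p' y) = g y := rfl
    rw [e1, e2, ← hftc]
    ring
  constructor
  · intro hanti
    intro x hx y hy hxy
    have hx0 : (0:ℝ) < x := lt_of_lt_of_le hxd hx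
    have h1 : 0 ≤ ∫ s in Ioc x y, (F s / r s - F y / r y) * (r s * Ψ s) := by
      apply setIntegral_nonneg measurableSet_Ioc
      intro s hs
      have hs0 : (0:ℝ) < s := lt_of_lt_of_le hx0 hs.1.le
      have hsmem : s ∈ Ici xd := le_trans hx hs.1.le
      exact mul_nonneg (sub_nonneg.2 (hanti hsmem hy hs.2)) (hrΨpos s hs0).le
    have h2 : 0 ≤ (F x / r x - F y / r y) * g x :=
      mul_nonneg (sub_nonneg.2 (hanti hx hy hxy)) (hgpos x hx0).le
    have := key x hx y hy hxy
    linarith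
  · intro hmono
    intro x hx y hy hxy
    have hx0 : (0:ℝ) < x := lt_of_lt_of_le hxd hx
    have h1 : (∫ s in Ioc x y, (F s / r s - F y / r y) * (r s * Ψ s)) ≤ 0 := by
      apply setIntegral_nonpos measurableSet_Ioc
      intro s hs
      have hs0 : (0:ℝ) < s := lt_of_lt_of_le hx0 hs.1.le
      have hsmem : s ∈ Ici xd := le_trans hx hs.1.le
      exact mul_nonpos_of_nonpos_of_nonneg
        (sub_nonpos.2 (hmono hsmem hy hs.2)) (hrΨpos s hs0).le
    have h2 : (F x / r x - F y / r y) * g x ≤ 0 :=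
      mul_nonpos_of_nonpos_of_nonneg (sub_nonpos.2 (hmono hx hy hxy)) (hgpos x hx0).le
    have := key x hx y hy hxy
    linarith
end
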